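/- arXiv:1407.0918 — 12 statements merged into one kernel-verified Lean document; each statement's English description precedes it below -/
import Mathlib

section
/- For every d > 0, the map F : (0,∞)² → (0,∞)², F(x,y) = ((y+d)/(xy), (d·x·y + y + d)/(y·(y+d))), is a homeomorphism of (0,∞)² onto itself, and its inverse satisfies F⁻¹ = S ∘ F ∘ S, where S(x,y) = (y,x) is the reflection in the diagonal. -/
noncomputable def Fmap (d : ℝ) (p : ℝ × ℝ) : ℝ × ℝ :=
  ((p.2 + d) / (p.1 * p.2), (d * p.1 * p.2 + p.2 + d) / (p.2 * (p.2 + d)))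

def swapMap (p : ℝ × ℝ) : ℝ × ℝ := (p.2, p.1)

lemma Fmap_pos {d : ℝ} (hd : 0 < d) {p : ℝ × ℝ} (h : 0 < p.1 ∧ 0 < p.2) :
    0 < (Fmap d p).1 ∧ 0 < (Fmap d p).2 := by
  obtain ⟨hx, hy⟩ := h
  constructor <;> · simp only [Fmap]; positivity

lemma Fmap_inv_right (d : ℝ) (hd : 0 < d) {x y : ℝ} (hx : 0 < x) (hy : 0 < y) :
    Fmap d (swapMap (Fmap d (swapMap (x, y)))) = (x, y) := by
  have hx' := hx.ne'
  have hy' := hy.ne'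
  have hxd : x + d ≠ 0 := by positivity
  have h1 : d * x * y + x + d ≠ 0 := by positivity
  simp only [Fmap, swapMap]
  have h2 : (x + d) / (y * x) * ((d * y * x + x + d) / (x * (x + d))) ≠ 0 := by
    have : (0:ℝ) < (x + d) / (y * x) * ((d * y * x + x + d) / (x * (x + d))) := by positivity
    exact this.ne'
  have h3 : (x + d) / (y * x) + d ≠ 0 := by
    have : (0:ℝ) < (x + d) / (y * x) + d := by positivity
    exact this.ne'
  refine Prod.ext ?_ ?_ <;> simp only <;> field_simp <;> ring

lemma Fmap_inv_left (d : ℝ) (hd : 0 < d) {x y : ℝ} (hx : 0 < x) (hy : 0 < y) :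
    swapMap (Fmap d (swapMap (Fmap d (x, y)))) = (x, y) := by
  have hx' := hx.ne'
  have hy' := hy.ne'
  have hyd : y + d ≠ 0 := by positivity
  have h1 : d * x * y + y + d ≠ 0 := by positivity
  simp only [Fmap, swapMap]
  have h2 : (d * x * y + y + d) / (y * (y + d)) * ((y + d) / (x * y)) ≠ 0 := by
    have : (0:ℝ) < (d * x * y + y + d) / (y * (y + d)) * ((y + d) / (x * y)) := by positivity
    exact this.ne'
  have h3 : (d * x * y + y + d) / (y * (y + d)) + d ≠ 0 := by
    have : (0:ℝ) < (d * x * y + y + d) / (y * (y + d)) + d := by positivity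
    exact this.ne'
  refine Prod.ext ?_ ?_ <;> simp only <;> field_simp <;> ring

/-- For every `d > 0`, the map `F` is a homeomorphism of `(0,∞)²` onto
itself, and its inverse satisfies `F⁻¹ = S ∘ F ∘ S` where `S` is the reflection in the
diagonal. -/
theorem stmt_0 (d : ℝ) (hd : 0 < d) :
    ∃ H : {p : ℝ × ℝ // 0 < p.1 ∧ 0 < p.2} ≃ₜ {p : ℝ × ℝ // 0 < p.1 ∧ 0 < p.2},
      (∀ p : {p : ℝ × ℝ // 0 < p.1 ∧ 0 < p.2}, (H p : ℝ × ℝ) = Fmap d (p : ℝ × ℝ)) ∧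
      (∀ p : {p : ℝ × ℝ // 0 < p.1 ∧ 0 < p.2},
        (H.symm p : ℝ × ℝ) = swapMap (Fmap d (swapMap (p : ℝ × ℝ)))) := by
  have hswap : ∀ p : ℝ × ℝ, (0 < p.1 ∧ 0 < p.2) → 0 < (swapMap p).1 ∧ 0 < (swapMap p).2 :=
    fun p h => ⟨h.2, h.1⟩
  refine ⟨{
    toFun := fun p => ⟨Fmap d p.1, Fmap_pos hd p.2⟩
    invFun := fun p => ⟨swapMap (Fmap d (swapMap p.1)),
      hswap _ (Fmap_pos hd (hswap _ p.2))⟩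
    left_inv := fun p => Subtype.ext (by
      have := Fmap_inv_left d hd p.2.1 p.2.2
      simpa using this)
    right_inv := fun p => Subtype.ext (by
      have := Fmap_inv_right d hd p.2.1 p.2.2
      simpa using this)
    continuous_toFun := by
      apply Continuous.subtype_mk
      apply Continuous.prodMk
      · exact Continuous.div (by fun_prop) (by fun_prop)
          (fun p => (mul_pos p.2.1 p.2.2).ne')
      · exact Continuous.div (by fun_prop) (by fun_prop)
          (fun p => by have h1 := p.2.1; have h2 := p.2.2; positivity)
    continuous_invFun := by
      apply Continuous.subtype_mk
      simp only [swapMap, Fmap]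
      apply Continuous.prodMk
      · exact Continuous.div (by fun_prop) (by fun_prop)
          (fun p => by have h1 := p.2.1; have h2 := p.2.2; positivity)
      · exact Continuous.div (by fun_prop) (by fun_prop)
          (fun p => by have h1 := p.2.1; have h2 := p.2.2; positivity)
  }, fun p => rfl, fun p => rfl⟩
end

section
/- For every d > 0 and all x, y > 0, the function G(x,y) = x + y + 1/x + 1/y + d/(x·y) is invariant under F: G(F(x,y)) = G(x,y). Consequently, along every solution (u_n, v_n) of the system u_{n+1}·u_n = 1 + d/v_n, v_{n+1}·v_n = 1 + d/u_{n+1} with positive initial data, the quantity u_n + v_n + 1/u_n + 1/v_n + d/(u_n·v_n) is independent of n. -/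
noncomputable def Gf (d : ℝ) (p : ℝ × ℝ) : ℝ :=
  p.1 + p.2 + 1 / p.1 + 1 / p.2 + d / (p.1 * p.2)

lemma inv_key (d : ℝ) (hd : 0 < d) (x y : ℝ) (hx : 0 < x) (hy : 0 < y) :
    Gf d (Fmap d (x, y)) = Gf d (x, y) := by
  have h1 : x ≠ 0 := hx.ne'
  have h2 : y ≠ 0 := hy.ne'
  have h3 : y + d ≠ 0 := by positivity
  have h4 : d * x * y + y + d ≠ 0 := by positivity
  simp only [Gf, Fmap]
  field_simp
  ring

/-- `G` is invariant under `F`, and consequently the quantity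
`u_n + v_n + 1/u_n + 1/v_n + d/(u_n v_n)` is constant along every positive solution
of the system. -/
theorem stmt_1 (d : ℝ) (hd : 0 < d) :
    (∀ x y : ℝ, 0 < x → 0 < y → Gf d (Fmap d (x, y)) = Gf d (x, y)) ∧
    (∀ u v : ℕ → ℝ, (∀ n, 0 < u n) → (∀ n, 0 < v n) →
      (∀ n, u (n + 1) * u n = 1 + d / v n) →
      (∀ n, v (n + 1) * v n = 1 + d / u (n + 1)) →
      ∀ n : ℕ,
        u n + v n + 1 / u n + 1 / v n + d / (u n * v n)
          = u 0 + v 0 + 1 / u 0 + 1 / v 0 + d / (u 0 * v 0)) := by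
  constructor
  · exact fun x y hx hy => inv_key d hd x y hx hy
  · intro u v hu hv h1 h2
    have step : ∀ n, (u (n + 1), v (n + 1)) = Fmap d (u n, v n) := by
      intro n
      have hun := (hu n).ne'
      have hvn := (hv n).ne'
      have hun1 := (hu (n + 1)).ne'
      have e1 := h1 n
      have e2 := h2 n
      have hu1 : u (n + 1) = (v n + d) / (u n * v n) := by
        field_simp at e1 ⊢
        linarith [e1]
      have hv1 : v (n + 1) = (d * u n * v n + v n + d) / (v n * (v n + d)) := by
        have hvd : v n + d ≠ 0 := (add_pos (hv n) hd).ne'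
        rw [hu1] at e2
        field_simp at e2 ⊢
        nlinarith [e2]
      simp only [Fmap]
      exact Prod.ext hu1 hv1
    intro n
    induction n with
    | zero => rfl
    | succ n ih =>
      have : Gf d (u (n + 1), v (n + 1)) = Gf d (u n, v n) := by
        rw [step n]; exact inv_key d hd (u n) (v n) (hu n) (hv n)
      simp only [Gf] at this ih ⊢
      rw [this, ih]
end

section
/- For every d > 0, the cubic equation t³ − t − d = 0 has exactly one positive real root ℓ, this root satisfies max(1, d^{1/3}) < ℓ < 1 + d/2, and the point L = (ℓ, ℓ) is the unique fixed point of F in (0,∞)². -/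
set_option maxHeartbeats 2000000 in
/-- For every `d > 0` the cubic `t³ − t − d = 0` has exactly one positive
root `ℓ`, this root satisfies `max 1 d^(1/3) < ℓ < 1 + d/2`, and `L = (ℓ,ℓ)` is the
unique fixed point of `F` in `(0,∞)²`. -/
theorem stmt_2 (d : ℝ) (hd : 0 < d) :
    ∃ l : ℝ, 0 < l ∧ l ^ 3 - l - d = 0 ∧
      (∀ t : ℝ, 0 < t → t ^ 3 - t - d = 0 → t = l) ∧
      max 1 (d ^ ((1 : ℝ) / 3)) < l ∧ l < 1 + d / 2 ∧
      (∀ p : ℝ × ℝ, 0 < p.1 → 0 < p.2 → (Fmap d p = p ↔ p = (l, l))) := by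
  have hcpos : 0 < d ^ ((1 : ℝ) / 3) := Real.rpow_pos_of_pos hd _
  have hc3 : (d ^ ((1 : ℝ) / 3)) ^ 3 = d := by
    rw [← Real.rpow_natCast (d ^ ((1 : ℝ) / 3)) 3, ← Real.rpow_mul hd.le]
    norm_num
  set c : ℝ := d ^ ((1 : ℝ) / 3) with hc
  have hm1 : (1 : ℝ) ≤ max 1 c := le_max_left _ _
  have hcM : c < 1 + d / 2 := by
    nlinarith [mul_nonneg (sq_nonneg (c - 1)) (by linarith : (0:ℝ) ≤ c + 2), hcpos, hc3]
  have hmM : max 1 c < 1 + d / 2 := by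
    rcases max_choice 1 c with h | h <;> rw [h]
    · linarith
    · exact hcM
  have hfm : (max 1 c) ^ 3 - (max 1 c) - d < 0 := by
    rcases max_choice 1 c with h | h <;> rw [h] <;> nlinarith [hc3, hcpos]
  have hfM : 0 < (1 + d / 2) ^ 3 - (1 + d / 2) - d := by
    nlinarith [mul_pos hd hd, mul_pos (mul_pos hd hd) hd]
  have hcont : ContinuousOn (fun t : ℝ => t ^ 3 - t - d) (Set.Icc (max 1 c) (1 + d / 2)) := by
    apply Continuous.continuousOn; continuity
  have hsub := intermediate_value_Ioo hmM.le hcont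
  have h0 : (0 : ℝ) ∈ Set.Ioo ((max 1 c) ^ 3 - (max 1 c) - d) ((1 + d / 2) ^ 3 - (1 + d / 2) - d) :=
    ⟨hfm, hfM⟩
  obtain ⟨l, hlmem, hfl⟩ := hsub h0
  have hlm : max 1 c < l := hlmem.1
  have hlM : l < 1 + d / 2 := hlmem.2
  have hl1 : 1 < l := lt_of_le_of_lt hm1 hlm
  have hlpos : 0 < l := by linarith
  have hroot : l ^ 3 - l - d = 0 := hfl
  -- uniqueness of positive root
  have huniq : ∀ t : ℝ, 0 < t → t ^ 3 - t - d = 0 → t = l := by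
    intro t ht hft
    have ht1 : 1 < t := by nlinarith [mul_pos ht ht, mul_pos (mul_pos ht ht) ht]
    rcases lt_trichotomy t l with h | h | h
    · exfalso
      have hpos : (0:ℝ) < l ^ 2 + l * t + t ^ 2 - 1 := by nlinarith
      nlinarith [mul_pos (sub_pos.mpr h) hpos]
    · exact h
    · exfalso
      have hpos : (0:ℝ) < t ^ 2 + t * l + l ^ 2 - 1 := by nlinarith
      nlinarith [mul_pos (sub_pos.mpr h) hpos]
  refine ⟨l, hlpos, hroot, huniq, hlm, hlM, ?_⟩
  intro p hp1 hp2
  obtain ⟨x, y⟩ := p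
  simp only at hp1 hp2
  constructor
  · intro hfix
    have h1 : (y + d) / (x * y) = x := congrArg Prod.fst hfix
    have h2 : (d * x * y + y + d) / (y * (y + d)) = y := congrArg Prod.snd hfix
    have hxy0 : x * y ≠ 0 := by positivity
    have hyd0 : y * (y + d) ≠ 0 := by positivity
    rw [div_eq_iff hxy0] at h1
    rw [div_eq_iff hyd0] at h2
    -- h1 : y + d = x * (x * y), h2 : d*x*y + y + d = y * (y * (y + d))
    have e1 : d = y * (x ^ 2 - 1) := by linear_combination h1
    have e2 : y * (d * x + x ^ 2 - x ^ 2 * y ^ 2) = 0 := by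
      linear_combination h2 + (y ^ 2 - 1) * h1
    have e2' : d * x + x ^ 2 - x ^ 2 * y ^ 2 = 0 := by
      rcases mul_eq_zero.mp e2 with h | h
      · exact absurd h hp2.ne'
      · exact h
    have e3 : x * (d + x - x * y ^ 2) = 0 := by linear_combination e2'
    have e3' : d = x * (y ^ 2 - 1) := by
      rcases mul_eq_zero.mp e3 with h | h
      · exact absurd h hp1.ne'
      · linear_combination h
    have key : (y - x) * (x * y + 1) = 0 := by linear_combination e1 - e3'
    have hxeqy : x = y := by
      rcases mul_eq_zero.mp key with h | h
      · linarith
      · nlinarith [mul_pos hp1 hp2]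
    subst hxeqy
    have hxroot : x ^ 3 - x - d = 0 := by linear_combination -h1
    have := huniq x hp1 hxroot
    simp [this]
  · intro hp
    rw [hp]
    have hl3 : l ^ 3 = l + d := by linarith [hroot]
    have hld : 0 < l + d := by linarith
    unfold Fmap
    simp only [Prod.mk.injEq]
    constructor
    · rw [div_eq_iff (by positivity : l * l ≠ 0)]; linear_combination -hl3
    · rw [div_eq_iff (by positivity : l * (l + d) ≠ 0)]; linear_combination -hl3
end

section
/- For every d > 0: (i) G tends to +∞ at the infinite point of (0,∞)², i.e., for every M > 0 the sublevel set {(x,y) ∈ (0,∞)² : G(x,y) ≤ M} is compact; (ii) the only critical point of G in (0,∞)² (the only point where both partial derivatives of G vanish) is L = (ℓ,ℓ); (iii) G attains at L its strict global minimum K_m = (4ℓ + 3d)/ℓ² = 3ℓ + 1/ℓ, and K_m > 4. -/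
open Set

lemma Gf_swap (d x y : ℝ) : Gf d (y, x) = Gf d (x, y) := by
  simp only [Gf]; ring

lemma continuousOn_Gf (d : ℝ) : ContinuousOn (Gf d) {p | 0 < p.1 ∧ 0 < p.2} := by
  rintro p ⟨hp1, hp2⟩
  apply ContinuousAt.continuousWithinAt
  unfold Gf
  fun_prop (disch := positivity)

lemma mem_Icc_of_Gf_le {d M : ℝ} (hd : 0 ≤ d) {p : ℝ × ℝ} (hp1 : 0 < p.1) (hp2 : 0 < p.2)
    (hG : Gf d p ≤ M) : p ∈ Icc (1 / M) M ×ˢ Icc (1 / M) M := by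
  obtain ⟨x, y⟩ := p
  have hxy : 0 ≤ d / (x * y) := by positivity
  have hx : 0 < 1 / x := one_div_pos.2 hp1
  have hy : 0 < 1 / y := one_div_pos.2 hp2
  simp only [Gf] at hG
  have hM : 0 < M := by linarith
  refine ⟨⟨?_, by linarith⟩, ⟨?_, by linarith⟩⟩
  · exact (one_div_le hM hp1).2 (by linarith)
  · exact (one_div_le hM hp2).2 (by linarith)

lemma isCompact_Gf_sublevel {d M : ℝ} (hd : 0 ≤ d) (hM : 0 < M) :
    IsCompact {p : ℝ × ℝ | 0 < p.1 ∧ 0 < p.2 ∧ Gf d p ≤ M} := by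
  have hK : IsCompact (Icc (1 / M) M ×ˢ Icc (1 / M) M) := isCompact_Icc.prod isCompact_Icc
  have hKpos : Icc (1 / M) M ×ˢ Icc (1 / M) M ⊆ {p : ℝ × ℝ | 0 < p.1 ∧ 0 < p.2} := by
    rintro p ⟨⟨h1, -⟩, ⟨h2, -⟩⟩
    exact ⟨(one_div_pos.2 hM).trans_le h1, (one_div_pos.2 hM).trans_le h2⟩
  have hset : {p : ℝ × ℝ | 0 < p.1 ∧ 0 < p.2 ∧ Gf d p ≤ M}
      = (Icc (1 / M) M ×ˢ Icc (1 / M) M) ∩ Gf d ⁻¹' Iic M := by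
    ext p
    refine ⟨fun ⟨h1, h2, hG⟩ => ⟨mem_Icc_of_Gf_le hd h1 h2 hG, hG⟩, fun ⟨hp, hG⟩ => ?_⟩
    exact ⟨(hKpos hp).1, (hKpos hp).2, hG⟩
  rw [hset]
  exact hK.of_isClosed_subset (((continuousOn_Gf d).mono hKpos).preimage_isClosed_of_isClosed
    hK.isClosed isClosed_Iic) inter_subset_left

lemma hasDerivAt_Gf_fst (d : ℝ) {x : ℝ} (hx : x ≠ 0) (y : ℝ) :
    HasDerivAt (fun s => Gf d (s, y)) (1 - 1 / x ^ 2 - d / (x ^ 2 * y)) x := by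
  have hG : (fun s => Gf d (s, y)) = fun s => s + y + s⁻¹ + 1 / y + d / y * s⁻¹ := by
    funext s; simp only [Gf]; ring
  rw [hG]
  refine ((((hasDerivAt_id x).add_const y).add (hasDerivAt_inv hx)).add_const (1 / y)).add
    ((hasDerivAt_inv hx).const_mul (d / y)) |>.congr_deriv ?_
  field_simp
  ring

lemma deriv_Gf_fst_eq_zero_iff (d : ℝ) {x y : ℝ} (hx : 0 < x) (hy : 0 < y) :
    deriv (fun s => Gf d (s, y)) x = 0 ↔ x ^ 2 * y - y = d := by
  rw [(hasDerivAt_Gf_fst d hx.ne' y).deriv, sub_sub, sub_eq_zero, eq_comm, sub_eq_iff_eq_add]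
  field_simp
  constructor <;> intro h <;> linarith

lemma deriv_Gf_snd_eq_zero_iff (d : ℝ) {x y : ℝ} (hx : 0 < x) (hy : 0 < y) :
    deriv (fun s => Gf d (x, s)) y = 0 ↔ y ^ 2 * x - x = d := by
  simp only [← Gf_swap d x]
  exact deriv_Gf_fst_eq_zero_iff d hy hx

lemma one_lt_of_cube_sub_self_pos {x : ℝ} (hx : 0 < x) (h : 0 < x ^ 3 - x) : 1 < x := by
  nlinarith [mul_pos hx hx]

lemma cube_sub_self_pos {x : ℝ} (hx : 1 < x) : 0 < x ^ 3 - x := by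
  rw [show x ^ 3 - x = x * (x + 1) * (x - 1) by ring]
  exact mul_pos (by positivity) (by linarith)

lemma eq_of_cube_sub_self_eq {x l : ℝ} (hx : 0 < x) (hl : 1 < l) (h : x ^ 3 - x = l ^ 3 - l) :
    x = l := by
  have hx1 : 1 < x := one_lt_of_cube_sub_self_pos hx (h ▸ cube_sub_self_pos hl)
  have hfac : (x - l) * (x ^ 2 + x * l + l ^ 2 - 1) = 0 := by linear_combination h
  have hpos : 0 < x ^ 2 + x * l + l ^ 2 - 1 := by nlinarith
  linarith [(mul_eq_zero.1 hfac).resolve_right hpos.ne']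

lemma deriv_Gf_eq_zero_iff {x y l : ℝ} (hx : 0 < x) (hy : 0 < y) (hl : 1 < l) :
    (deriv (fun s => Gf (l ^ 3 - l) (s, y)) x = 0 ∧ deriv (fun s => Gf (l ^ 3 - l) (x, s)) y = 0)
      ↔ (x = l ∧ y = l) := by
  rw [deriv_Gf_fst_eq_zero_iff _ hx hy, deriv_Gf_snd_eq_zero_iff _ hx hy]
  refine ⟨fun ⟨h1, h2⟩ => ?_, fun ⟨hxl, hyl⟩ => ⟨by subst hxl hyl; ring, by subst hxl hyl; ring⟩⟩
  have hxy : x = y := by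
    have hfac : (x - y) * (x * y + 1) = 0 := by linear_combination h1 - h2
    linarith [(mul_eq_zero.1 hfac).resolve_right (by positivity)]
  subst hxy
  have hxl := eq_of_cube_sub_self_eq hx hl (by linear_combination h1)
  exact ⟨hxl, hxl⟩

lemma Gf_diag (l : ℝ) (hl : l ≠ 0) : Gf (l ^ 3 - l) (l, l) = 3 * l + 1 / l := by
  simp only [Gf]
  field_simp
  ring

lemma four_lt_three_mul_add_inv {l : ℝ} (hl : 1 < l) : 4 < 3 * l + 1 / l := by
  have hl0 : 0 < l := by linarith
  rw [← sub_pos, show 3 * l + 1 / l - 4 = (3 * l - 1) * (l - 1) / l by field_simp; ring]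
  exact div_pos (mul_pos (by linarith) (by linarith)) hl0

lemma Gf_sq_sub_Gf_diag {u v l : ℝ} (hu : u ≠ 0) (hv : v ≠ 0) (hl : l ≠ 0) :
    Gf (l ^ 3 - l) (u ^ 2, v ^ 2) - Gf (l ^ 3 - l) (l, l)
      = (l * (u ^ 2 * v ^ 2 + 1) * (u - v) ^ 2 + (u * v - l) ^ 2 * (2 * l * (u * v) + l ^ 2 - 1))
        / (u ^ 2 * v ^ 2 * l) := by
  simp only [Gf]
  field_simp
  ring

lemma Gf_diag_lt {l x y : ℝ} (hl : 1 < l) (hx : 0 < x) (hy : 0 < y) (hne : (x, y) ≠ (l, l)) :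
    Gf (l ^ 3 - l) (l, l) < Gf (l ^ 3 - l) (x, y) := by
  obtain ⟨u, hu, rfl⟩ : ∃ u, 0 < u ∧ u ^ 2 = x := ⟨√x, Real.sqrt_pos.2 hx, Real.sq_sqrt hx.le⟩
  obtain ⟨v, hv, rfl⟩ : ∃ v, 0 < v ∧ v ^ 2 = y := ⟨√y, Real.sqrt_pos.2 hy, Real.sq_sqrt hy.le⟩
  have hl0 : 0 < l := by linarith
  rw [← sub_pos, Gf_sq_sub_Gf_diag hu.ne' hv.ne' hl0.ne']
  refine div_pos ?_ (by positivity)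
  have hfac : 0 < 2 * l * (u * v) + l ^ 2 - 1 := by nlinarith [mul_pos hu hv]
  rcases eq_or_ne u v with rfl | huv
  · have hsq : u * u - l ≠ 0 := fun h => hne (by rw [← sq] at h; simp [sub_eq_zero.1 h])
    nlinarith [mul_pos (sq_pos_of_ne_zero hsq) hfac]
  · have hsq := sq_pos_of_ne_zero (sub_ne_zero.2 huv)
    nlinarith [mul_pos (mul_pos hl0 (by positivity : (0 : ℝ) < u ^ 2 * v ^ 2 + 1)) hsq,
      mul_nonneg (sq_nonneg (u * v - l)) hfac.le]

/-- (i) every sublevel set of `G` in `(0,∞)²` is compact ("`G → +∞` at the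
infinite point"); (ii) the unique critical point of `G` in `(0,∞)²` is `L = (ℓ,ℓ)`;
(iii) `G` attains at `L` its strict global minimum `K_m = (4ℓ+3d)/ℓ² = 3ℓ + 1/ℓ > 4`. -/
theorem stmt_3 (d l : ℝ) (hd : 0 < d) (hl : 0 < l) (hl3 : l ^ 3 - l - d = 0) :
    (∀ M : ℝ, 0 < M → IsCompact {p : ℝ × ℝ | 0 < p.1 ∧ 0 < p.2 ∧ Gf d p ≤ M}) ∧
    (∀ x y : ℝ, 0 < x → 0 < y →
      ((deriv (fun s : ℝ => Gf d (s, y)) x = 0 ∧ deriv (fun s : ℝ => Gf d (x, s)) y = 0) ↔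
        (x = l ∧ y = l))) ∧
    Gf d (l, l) = (4 * l + 3 * d) / l ^ 2 ∧
    (4 * l + 3 * d) / l ^ 2 = 3 * l + 1 / l ∧
    3 * l + 1 / l > 4 ∧
    (∀ p : ℝ × ℝ, 0 < p.1 → 0 < p.2 → p ≠ (l, l) → Gf d (l, l) < Gf d p) := by
  obtain rfl : d = l ^ 3 - l := by linarith
  have hl1 : 1 < l := one_lt_of_cube_sub_self_pos hl hd
  have hK : (4 * l + 3 * (l ^ 3 - l)) / l ^ 2 = 3 * l + 1 / l := by
    field_simp
    ring
  exact ⟨fun M hM => isCompact_Gf_sublevel hd.le hM,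
    fun x y hx hy => deriv_Gf_eq_zero_iff hx hy hl1,
    hK ▸ Gf_diag l hl.ne', hK, four_lt_three_mul_add_inv hl1,
    fun ⟨x, y⟩ hx hy hne => Gf_diag_lt hl1 hx hy hne⟩
end

section
/- For every d > 0: (i) the solutions of the system are permanent, i.e., for every M₀ ∈ (0,∞)² there exist constants 0 < a ≤ b such that Fⁿ(M₀) ∈ [a,b]² for all n ≥ 0; (ii) if M₀ ≠ L, then the sequence (Fⁿ(M₀))_{n≥0} does not converge; (iii) the equilibrium L is locally (Lyapunov) stable: for every ε > 0 there is δ > 0 such that every M with dist(M, L) < δ satisfies dist(Fⁿ(M), L) < ε for all n ≥ 0. -/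
set_option maxHeartbeats 1000000

noncomputable def Imap (d : ℝ) (p : ℝ × ℝ) : ℝ :=
  p.1 + p.2 + 1/p.1 + 1/p.2 + d/(p.1*p.2)

section Aux
variable {d l : ℝ}

lemma Fpos (hd : 0 < d) {p : ℝ × ℝ} (hx : 0 < p.1) (hy : 0 < p.2) :
    0 < (Fmap d p).1 ∧ 0 < (Fmap d p).2 := by
  constructor <;> · simp only [Fmap]; positivity

lemma Iinv (hd : 0 < d) {p : ℝ × ℝ} (hx : 0 < p.1) (hy : 0 < p.2) :
    Imap d (Fmap d p) = Imap d p := by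
  obtain ⟨x, y⟩ := p
  simp only [Fmap, Imap] at *
  have h1 : x ≠ 0 := ne_of_gt hx
  have h2 : y ≠ 0 := ne_of_gt hy
  have h3 : y + d ≠ 0 := by positivity
  have h4 : d * x * y + y + d ≠ 0 := by positivity
  field_simp
  ring

lemma Ige (hd : 0 < d) {p : ℝ × ℝ} (hx : 0 < p.1) (hy : 0 < p.2) :
    p.1 ≤ Imap d p ∧ p.2 ≤ Imap d p ∧ 1/p.1 ≤ Imap d p ∧ 1/p.2 ≤ Imap d p := by
  obtain ⟨x, y⟩ := p
  simp only [Imap] at *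
  have h1 : 0 < 1/x := by positivity
  have h2 : 0 < 1/y := by positivity
  have h3 : 0 < d/(x*y) := by positivity
  refine ⟨by linarith, by linarith, by linarith, by linarith⟩

variable (hd : 0 < d) (hl : 0 < l) (hl3 : l ^ 3 - l - d = 0)

include hd hl hl3

lemma l_gt_one : 1 < l := by
  nlinarith [sq_nonneg l, sq_nonneg (l-1), sq_nonneg (l+1)]

lemma key_decomp {x y : ℝ} (hx : 0 < x) (hy : 0 < y) :
    l * x * y * (Imap d (x, y) - (3*l + 1/l)) =
      l * (x*y+1) * (x + y - 2 * Real.sqrt (x*y))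
      + (Real.sqrt (x*y) - l)^2 * (2*l*Real.sqrt (x*y) + l^2 - 1) := by
  set q := Real.sqrt (x*y) with hq
  have hq2 : q^2 = x*y := Real.sq_sqrt (by positivity)
  have hdl : d = l^3 - l := by linarith
  have h1 : x ≠ 0 := ne_of_gt hx
  have h2 : y ≠ 0 := ne_of_gt hy
  have h3 : l ≠ 0 := ne_of_gt hl
  have hs : l * x * y * (Imap d (x, y) - (3*l + 1/l)) =
      l*(x*y+1)*(x+y) + l*d - (3*l^2+1)*(x*y) := by
    simp only [Imap]; field_simp; ring
  rw [hs, hdl, ← hq2]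
  ring

omit hd hl hl3 in
lemma amgm_gap {x y : ℝ} (hx : 0 < x) (hy : 0 < y) :
    0 ≤ x + y - 2 * Real.sqrt (x*y) := by
  have h1 : Real.sqrt x ^ 2 = x := Real.sq_sqrt hx.le
  have h2 : Real.sqrt y ^ 2 = y := Real.sq_sqrt hy.le
  have h3 : Real.sqrt (x*y) = Real.sqrt x * Real.sqrt y := Real.sqrt_mul hx.le y
  nlinarith [sq_nonneg (Real.sqrt x - Real.sqrt y)]

lemma I_ge {x y : ℝ} (hx : 0 < x) (hy : 0 < y) :
    3*l + 1/l ≤ Imap d (x, y) := by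
  have hdec := key_decomp hd hl hl3 hx hy
  have hq0 : 0 ≤ Real.sqrt (x*y) := Real.sqrt_nonneg _
  have hga := amgm_gap hx hy
  have hl1 := l_gt_one hd hl hl3
  have hT1 : 0 ≤ l*(x*y+1)*(x + y - 2*Real.sqrt (x*y)) :=
    mul_nonneg (by positivity) hga
  have hT2 : 0 ≤ (Real.sqrt (x*y) - l)^2*(2*l*Real.sqrt (x*y) + l^2 - 1) :=
    mul_nonneg (sq_nonneg _) (by nlinarith)
  by_contra hcon
  push_neg at hcon
  have hneg : l * x * y * (Imap d (x, y) - (3*l + 1/l)) < 0 :=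
    mul_neg_of_pos_of_neg (by positivity) (by linarith)
  linarith

lemma I_strict {x y : ℝ} (hx : 0 < x) (hy : 0 < y) (hne : (x, y) ≠ ((l, l) : ℝ × ℝ)) :
    3*l + 1/l < Imap d (x, y) := by
  rcases lt_or_eq_of_le (I_ge hd hl hl3 hx hy) with h | h
  · exact h
  exfalso
  have hdec := key_decomp hd hl hl3 hx hy
  have h0 : l * x * y * (Imap d (x, y) - (3*l + 1/l)) = 0 := by rw [← h]; ring
  rw [h0] at hdec
  set q := Real.sqrt (x*y) with hq
  have hq2 : q^2 = x*y := Real.sq_sqrt (by positivity)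
  have hq0 : 0 ≤ q := Real.sqrt_nonneg _
  have hga := amgm_gap hx hy
  have hl1 := l_gt_one hd hl hl3
  have hpos2 : 0 < 2*l*q + l^2 - 1 := by nlinarith
  have hT1f : 0 < l*(x*y+1) := by positivity
  have hT1 : 0 ≤ l*(x*y+1)*(x + y - 2*q) := mul_nonneg hT1f.le hga
  have hT2 : 0 ≤ (q-l)^2*(2*l*q + l^2 - 1) := mul_nonneg (sq_nonneg _) hpos2.le
  have e2 : (q-l)^2*(2*l*q + l^2 - 1) = 0 := by linarith
  have e1 : l*(x*y+1)*(x + y - 2*q) = 0 := by linarith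
  have hql : q = l := by
    rcases mul_eq_zero.mp e2 with h' | h'
    · have := pow_eq_zero_iff (n := 2) (by norm_num) |>.mp h'
      linarith [sub_eq_zero.mp this]
    · linarith
  have hxy : x + y - 2*q = 0 := by
    rcases mul_eq_zero.mp e1 with h' | h'
    · exact absurd h' (ne_of_gt hT1f)
    · exact h'
  have h5 : (x - y)^2 = 0 := by linear_combination (x+y+2*q)*hxy + 4*hq2
  have h6 : x = y := by nlinarith [sq_nonneg (x - y)]
  have h7 : x = l := by rw [h6] at hxy; linarith
  exact hne (by rw [h7, h6.symm.trans h7])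

lemma fixed_pt {x y : ℝ} (hx : 0 < x) (hy : 0 < y) (hfix : Fmap d (x, y) = (x, y)) :
    x = l ∧ y = l := by
  have hl1 := l_gt_one hd hl hl3
  have h1 : x ≠ 0 := ne_of_gt hx
  have h2 : y ≠ 0 := ne_of_gt hy
  have h3 : y + d ≠ 0 := by positivity
  simp only [Fmap, Prod.mk.injEq] at hfix
  obtain ⟨f1, f2⟩ := hfix
  have e1 : y + d = x * (x * y) := by
    field_simp at f1; linarith
  have e2 : d * x * y + y + d = y * (y * (y + d)) := by
    field_simp at f2; linarith
  have hfac : (x - y) * (x*y*(x*y+1)) = 0 := by linear_combination (y^2 - x*y - 1) * e1 + e2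
  have hxy : x = y := by
    rcases mul_eq_zero.mp hfac with h' | h'
    · linarith [sub_eq_zero.mp h']
    · have : 0 < x*y*(x*y+1) := by positivity
      linarith
  subst hxy
  have e3 : (x - l) * (x^2 + x*l + l^2 - 1) = 0 := by
    linear_combination -e1 - hl3
  have hxl : x = l := by
    rcases mul_eq_zero.mp e3 with h' | h'
    · linarith [sub_eq_zero.mp h']
    · nlinarith
  exact ⟨hxl, hxl⟩

lemma quant {x y e : ℝ} (hx : 0 < x) (hy : 0 < y) (he : 0 < e) (he1 : e ≤ 1)
    (hA : x + y - 2 * Real.sqrt (x*y) ≤ e)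
    (hB : (Real.sqrt (x*y) - l)^2 ≤ e^2) :
    (x - l)^2 ≤ (7 + 2*l) * e ∧ (y - l)^2 ≤ (7 + 2*l) * e := by
  set q := Real.sqrt (x*y) with hq
  have hq2 : q^2 = x*y := Real.sq_sqrt (by positivity)
  have hga := amgm_gap hx hy
  have hl1 := l_gt_one hd hl hl3
  have hBa : q - l ≤ e := by nlinarith
  have hBb : -e ≤ q - l := by nlinarith
  have hid : (x - l)^2 + (y - l)^2 =
      (x + y - 2*q)^2 + 4*(x + y - 2*q)*(q - l) + 2*(q - l)^2 + 2*l*(x + y - 2*q) := by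
    linear_combination (2 : ℝ) * hq2
  have hsum : (x - l)^2 + (y - l)^2 ≤ (7 + 2*l) * e := by
    nlinarith [sq_nonneg (x + y - 2*q), mul_nonneg hga he.le, sq_nonneg (q - l)]
  constructor
  · nlinarith [sq_nonneg (y - l)]
  · nlinarith [sq_nonneg (x - l)]

lemma stable_main {B e ε' ε x y : ℝ}
    (hB : B = 3*l + 1/l + 1)
    (hepos : 0 < e) (he1 : e ≤ 1)
    (hε'0 : 0 ≤ ε') (hε'a : ε' ≤ e/B^2) (hε'b : ε' ≤ (l^2-1)*e^2/(l*B^2))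
    (heε : (7 + 2*l) * e < ε^2) (hε : 0 < ε)
    (hx : 0 < x) (hy : 0 < y)
    (hIxy : Imap d (x, y) < 3*l + 1/l + ε') :
    dist ((x, y) : ℝ × ℝ) ((l, l) : ℝ × ℝ) < ε := by
  have hl1 := l_gt_one hd hl hl3
  have hlinv : 0 < 1/l := by positivity
  have hB4 : 4 < B := by rw [hB]; linarith
  have hBpos : 0 < B := by linarith
  have hl2 : 0 < l^2 - 1 := by nlinarith
  have hIge2 := I_ge hd hl hl3 hx hy
  have hIge3 := Ige hd (p := (x, y)) hx hy
  simp only at hIge3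
  have hε'1 : ε' ≤ 1 := by
    have hB2 : 1 ≤ B^2 := by nlinarith [hB4]
    have h1 : e/B^2 ≤ 1 := by rw [div_le_one (by positivity)]; linarith
    linarith
  have hxB : x ≤ B := by rw [hB]; linarith [hIge3.1]
  have hyB : y ≤ B := by rw [hB]; linarith [hIge3.2.1]
  set q := Real.sqrt (x*y) with hq
  have hq0 : 0 ≤ q := Real.sqrt_nonneg _
  have hga := amgm_gap hx hy
  have hdec := key_decomp hd hl hl3 hx hy
  rw [← hq] at hga hdec
  have hIdiff : Imap d (x, y) - (3*l + 1/l) < ε' := by linarith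
  have hIdiff0 : 0 ≤ Imap d (x, y) - (3*l + 1/l) := by linarith
  have hxy_le : x*y ≤ B^2 := by
    have := mul_le_mul hxB hyB hy.le hBpos.le
    have hBB : B*B = B^2 := by ring
    linarith
  have hsum : l*(x*y+1)*(x + y - 2*q) + (q-l)^2*(2*l*q + l^2 - 1) ≤ l*B^2*ε' := by
    rw [← hdec]
    have s1 : l*(x*y) ≤ l*(B^2) := mul_le_mul_of_nonneg_left hxy_le hl.le
    have s2 : 0 < l*x*y := by positivity
    have c1 : l*x*y*(Imap d (x, y) - (3*l + 1/l)) ≤ l*x*y*ε' :=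
      mul_le_mul_of_nonneg_left hIdiff.le s2.le
    have c2 : (l*(x*y))*ε' ≤ (l*(B^2))*ε' := mul_le_mul_of_nonneg_right s1 hε'0
    linarith
  have hT1nn : 0 ≤ l*(x*y+1)*(x + y - 2*q) := mul_nonneg (by positivity) hga
  have hfac2 : 0 ≤ 2*l*q + l^2 - 1 := by
    have : 0 ≤ 2*l*q := by positivity
    linarith
  have hT2nn : 0 ≤ (q-l)^2*(2*l*q + l^2 - 1) := mul_nonneg (sq_nonneg _) hfac2
  have hA : x + y - 2*q ≤ e := by
    have k1 : 0 ≤ l*(x*y)*(x + y - 2*q) := mul_nonneg (by positivity) hga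
    have expand : l*(x*y+1)*(x + y - 2*q) = l*(x*y)*(x + y - 2*q) + l*(x + y - 2*q) := by
      ring
    have h2' : l*B^2*ε' ≤ l*B^2*(e/B^2) :=
      mul_le_mul_of_nonneg_left hε'a (by positivity)
    have hre : l*B^2*(e/B^2) = l*e := by field_simp <;> ring
    have k2 : l*(x + y - 2*q) ≤ l*e := by linarith
    have k3 : x + y - 2*q ≤ e := by
      by_contra hcon
      push_neg at hcon
      have := mul_lt_mul_of_pos_left hcon hl
      linarith
    exact k3
  have hBq : (q-l)^2 ≤ e^2 := by
    have k1 : 0 ≤ 2*l*q*(q-l)^2 := by positivity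
    have expand : (q-l)^2*(2*l*q + l^2 - 1) = (q-l)^2*(l^2-1) + 2*l*q*(q-l)^2 := by
      ring
    have h2' : l*B^2*ε' ≤ l*B^2*((l^2-1)*e^2/(l*B^2)) :=
      mul_le_mul_of_nonneg_left hε'b (by positivity)
    have hre : l*B^2*((l^2-1)*e^2/(l*B^2)) = (l^2-1)*e^2 := by field_simp <;> ring
    have k2 : (q-l)^2*(l^2-1) ≤ e^2*(l^2-1) := by linarith
    have k3 : (q-l)^2 ≤ e^2 := by
      by_contra hcon
      push_neg at hcon
      have := mul_lt_mul_of_pos_right hcon hl2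
      linarith
    exact k3
  obtain ⟨u1, u2⟩ := quant hd hl hl3 hx hy hepos he1 (by rw [← hq]; exact hA)
    (by rw [← hq]; exact hBq)
  have habs : ∀ z : ℝ, (z - l)^2 < ε^2 → |z - l| < ε := by
    intro z hz
    by_contra hcon
    push_neg at hcon
    nlinarith [sq_abs (z - l), abs_nonneg (z - l)]
  have hd1 : |x - l| < ε := habs x (by linarith)
  have hd2 : |y - l| < ε := habs y (by linarith)
  rw [Prod.dist_eq]
  simp only [Real.dist_eq]
  exact max_lt hd1 hd2

end Aux

/-- (i) solutions are permanent: every orbit stays in a compact square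
`[a,b]² ⊂ (0,∞)²`; (ii) if `M₀ ≠ L` the orbit does not converge; (iii) the equilibrium
`L = (ℓ,ℓ)` is locally (Lyapunov) stable. -/
theorem stmt_4 (d l : ℝ) (hd : 0 < d) (hl : 0 < l) (hl3 : l ^ 3 - l - d = 0) :
    (∀ M₀ : ℝ × ℝ, 0 < M₀.1 → 0 < M₀.2 →
      ∃ a b : ℝ, 0 < a ∧ a ≤ b ∧
        ∀ n : ℕ, ((Fmap d)^[n] M₀).1 ∈ Set.Icc a b ∧ ((Fmap d)^[n] M₀).2 ∈ Set.Icc a b) ∧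
    (∀ M₀ : ℝ × ℝ, 0 < M₀.1 → 0 < M₀.2 → M₀ ≠ (l, l) →
      ¬ ∃ P : ℝ × ℝ, Filter.Tendsto (fun n : ℕ => (Fmap d)^[n] M₀) Filter.atTop (nhds P)) ∧
    (∀ ε : ℝ, 0 < ε → ∃ δ : ℝ, 0 < δ ∧
      ∀ M : ℝ × ℝ, 0 < M.1 → 0 < M.2 → dist M ((l, l) : ℝ × ℝ) < δ →
        ∀ n : ℕ, dist ((Fmap d)^[n] M) ((l, l) : ℝ × ℝ) < ε) := by
  have hl1 : 1 < l := l_gt_one hd hl hl3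
  -- common facts about orbits
  have orbpos : ∀ (M : ℝ × ℝ), 0 < M.1 → 0 < M.2 → ∀ n : ℕ,
      0 < ((Fmap d)^[n] M).1 ∧ 0 < ((Fmap d)^[n] M).2 := by
    intro M h1 h2 n
    induction n with
    | zero => exact ⟨h1, h2⟩
    | succ k ih =>
      rw [Function.iterate_succ_apply']
      exact Fpos hd ih.1 ih.2
  have orbinv : ∀ (M : ℝ × ℝ), 0 < M.1 → 0 < M.2 → ∀ n : ℕ,
      Imap d ((Fmap d)^[n] M) = Imap d M := by
    intro M h1 h2 n
    induction n with
    | zero => rfl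
    | succ k ih =>
      rw [Function.iterate_succ_apply', Iinv hd (orbpos M h1 h2 k).1 (orbpos M h1 h2 k).2, ih]
  refine ⟨?_, ?_, ?_⟩
  · -- (i) permanence
    intro M₀ h1 h2
    set c := Imap d M₀ with hc
    have hc1 : M₀.1 ≤ c := (Ige hd h1 h2).1
    have hc2 : 1/M₀.1 ≤ c := (Ige hd h1 h2).2.2.1
    have hcpos : 0 < c := lt_of_lt_of_le h1 hc1
    have hc2' : 1 ≤ c * c := by
      calc (1:ℝ) = M₀.1 * (1/M₀.1) := by field_simp
      _ ≤ c * c := by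
        apply mul_le_mul hc1 hc2 (by positivity) hcpos.le
    refine ⟨1/c, c, by positivity, by rw [div_le_iff₀ hcpos]; linarith, ?_⟩
    intro n
    obtain ⟨p1, p2⟩ := orbpos M₀ h1 h2 n
    have hI := orbinv M₀ h1 h2 n
    obtain ⟨g1, g2, g3, g4⟩ := Ige hd p1 p2
    rw [hI, ← hc] at g1 g2 g3 g4
    have g3' : 1 ≤ c * ((Fmap d)^[n] M₀).1 := (div_le_iff₀ p1).mp g3
    have g4' : 1 ≤ c * ((Fmap d)^[n] M₀).2 := (div_le_iff₀ p2).mp g4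
    exact ⟨⟨(div_le_iff₀ hcpos).mpr (by nlinarith), g1⟩,
           ⟨(div_le_iff₀ hcpos).mpr (by nlinarith), g2⟩⟩
  · -- (ii) non-convergence
    intro M₀ h1 h2 hne ⟨P, hP⟩
    set c := Imap d M₀ with hc
    -- bounds as in (i)
    have hc1 : M₀.1 ≤ c := (Ige hd h1 h2).1
    have hcpos : 0 < c := lt_of_lt_of_le h1 hc1
    -- P is positive
    have hP1 : Filter.Tendsto (fun n => ((Fmap d)^[n] M₀).1) Filter.atTop (nhds P.1) :=
      (continuous_fst.tendsto P).comp hP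
    have hP2 : Filter.Tendsto (fun n => ((Fmap d)^[n] M₀).2) Filter.atTop (nhds P.2) :=
      (continuous_snd.tendsto P).comp hP
    have hkey : ∀ (f : ℝ × ℝ → ℝ), Filter.Tendsto (fun n => f ((Fmap d)^[n] M₀))
        Filter.atTop (nhds (f P)) → (∀ n, 1/c ≤ f ((Fmap d)^[n] M₀)) → 1/c ≤ f P := by
      intro f hf hb
      exact ge_of_tendsto hf (Filter.Eventually.of_forall hb)
    have hPpos1 : 1/c ≤ P.1 := by
      apply ge_of_tendsto hP1
      filter_upwards with n
      have hp := (orbpos M₀ h1 h2 n).1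
      have g3 := (Ige hd (orbpos M₀ h1 h2 n).1 (orbpos M₀ h1 h2 n).2).2.2.1
      rw [orbinv M₀ h1 h2 n, ← hc] at g3
      have g3' : 1 ≤ c * ((Fmap d)^[n] M₀).1 := (div_le_iff₀ hp).mp g3
      exact (div_le_iff₀ hcpos).mpr (by nlinarith)
    have hPpos2 : 1/c ≤ P.2 := by
      apply ge_of_tendsto hP2
      filter_upwards with n
      have hp := (orbpos M₀ h1 h2 n).2
      have g4 := (Ige hd (orbpos M₀ h1 h2 n).1 (orbpos M₀ h1 h2 n).2).2.2.2
      rw [orbinv M₀ h1 h2 n, ← hc] at g4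
      have g4' : 1 ≤ c * ((Fmap d)^[n] M₀).2 := (div_le_iff₀ hp).mp g4
      exact (div_le_iff₀ hcpos).mpr (by nlinarith)
    have hP1pos : 0 < P.1 := lt_of_lt_of_le (by positivity) hPpos1
    have hP2pos : 0 < P.2 := lt_of_lt_of_le (by positivity) hPpos2
    -- F is continuous at P
    have hne1 : P.1 * P.2 ≠ 0 := by positivity
    have hne2 : P.2 * (P.2 + d) ≠ 0 := by positivity
    have hcF : ContinuousAt (Fmap d) P := by
      unfold Fmap
      apply ContinuousAt.prodMk
      · exact (continuousAt_snd.add continuousAt_const).div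
          (continuousAt_fst.mul continuousAt_snd) hne1
      · exact ((((continuousAt_const.mul continuousAt_fst).mul continuousAt_snd).add
          continuousAt_snd).add continuousAt_const).div
          (continuousAt_snd.mul (continuousAt_snd.add continuousAt_const)) hne2
    have hFP : Fmap d P = P := by
      have t1 : Filter.Tendsto (fun n => (Fmap d)^[n+1] M₀) Filter.atTop (nhds P) :=
        hP.comp (Filter.tendsto_add_atTop_nat 1)
      have t2 : Filter.Tendsto (fun n => Fmap d ((Fmap d)^[n] M₀)) Filter.atTop
          (nhds (Fmap d P)) := hcF.tendsto.comp hP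
      have heq : (fun n => Fmap d ((Fmap d)^[n] M₀)) = fun n => (Fmap d)^[n+1] M₀ := by
        funext n; rw [Function.iterate_succ_apply']
      rw [heq] at t2
      exact tendsto_nhds_unique t2 t1
    obtain ⟨hq1, hq2⟩ := fixed_pt hd hl hl3 hP1pos hP2pos (by simpa using hFP)
    -- I is continuous at P, hence c = Imap d P = Imap d (l,l)
    have hcI : ContinuousAt (Imap d) P := by
      unfold Imap
      exact ((((continuousAt_fst.add continuousAt_snd).add
        (continuousAt_const.div continuousAt_fst (ne_of_gt hP1pos))).add
        (continuousAt_const.div continuousAt_snd (ne_of_gt hP2pos))).add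
        (continuousAt_const.div (continuousAt_fst.mul continuousAt_snd) hne1))
    have t3 : Filter.Tendsto (fun n => Imap d ((Fmap d)^[n] M₀)) Filter.atTop
        (nhds (Imap d P)) := hcI.tendsto.comp hP
    have t4 : (fun n => Imap d ((Fmap d)^[n] M₀)) = fun _ => c := by
      funext n; exact orbinv M₀ h1 h2 n
    rw [t4] at t3
    have hcP : c = Imap d P := tendsto_nhds_unique tendsto_const_nhds t3
    have hPval : Imap d P = 3*l + 1/l := by
      have : P = ((l : ℝ), (l : ℝ)) := Prod.ext_iff.mpr ⟨hq1, hq2⟩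
      rw [this]
      have hln : l ≠ 0 := ne_of_gt hl
      simp only [Imap]
      field_simp
      nlinarith [hl3]
    have hstrict : 3*l + 1/l < c := by
      have := I_strict hd hl hl3 h1 h2 (by simpa using hne)
      simpa using this
    rw [hcP, hPval] at hstrict
    linarith
  · -- (iii) local stability
    intro ε hε
    obtain ⟨B, hB⟩ : ∃ B : ℝ, B = 3*l + 1/l + 1 := ⟨_, rfl⟩
    obtain ⟨e, he⟩ : ∃ e : ℝ, e = min 1 (ε^2/(8+2*l)) := ⟨_, rfl⟩
    obtain ⟨ε', hε'⟩ : ∃ x : ℝ, x = min (e/B^2) ((l^2-1)*e^2/(l*B^2)) := ⟨_, rfl⟩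
    have hlinv : 0 < 1/l := by positivity
    have hB4 : 4 < B := by rw [hB]; linarith
    have hBpos : 0 < B := by linarith
    have hl2 : 0 < l^2 - 1 := by nlinarith
    have hepos : 0 < e := by rw [he]; exact lt_min one_pos (by positivity)
    have he1 : e ≤ 1 := by rw [he]; exact min_le_left _ _
    have hε'pos : 0 < ε' := by
      rw [hε']; exact lt_min (by positivity) (by positivity)
    have hε'a : ε' ≤ e/B^2 := by rw [hε']; exact min_le_left _ _
    have hε'b : ε' ≤ (l^2-1)*e^2/(l*B^2) := by rw [hε']; exact min_le_right _ _
    have heε : (7 + 2*l) * e < ε^2 := by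
      have h1 : e ≤ ε^2/(8+2*l) := by rw [he]; exact min_le_right _ _
      have hr : (7+2*l)/(8+2*l) < 1 := (div_lt_one (by linarith)).mpr (by linarith)
      have hε2 : 0 < ε^2 := by positivity
      have h2 : (7+2*l)*(ε^2/(8+2*l)) = ε^2 * ((7+2*l)/(8+2*l)) := by ring
      nlinarith
    have hln : l ≠ 0 := ne_of_gt hl
    have hll : ((l : ℝ), (l : ℝ)).1 * ((l : ℝ), (l : ℝ)).2 ≠ 0 := by
      simp; positivity
    have hcI : ContinuousAt (Imap d) ((l : ℝ), (l : ℝ)) := by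
      unfold Imap
      exact ((((continuousAt_fst.add continuousAt_snd).add
        (continuousAt_const.div continuousAt_fst (by simpa using hln))).add
        (continuousAt_const.div continuousAt_snd (by simpa using hln))).add
        (continuousAt_const.div (continuousAt_fst.mul continuousAt_snd) hll))
    rw [Metric.continuousAt_iff] at hcI
    obtain ⟨δ, hδpos, hδ⟩ := hcI ε' hε'pos
    refine ⟨δ, hδpos, ?_⟩
    have hIL : Imap d ((l : ℝ), (l : ℝ)) = 3*l + 1/l := by
      simp only [Imap]
      field_simp
      nlinarith [hl3]
    intro M hM1 hM2 hMd n
    have hIM : Imap d M < 3*l + 1/l + ε' := by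
      have h' := hδ hMd
      rw [Real.dist_eq, hIL] at h'
      have h'' := abs_lt.mp h'
      linarith [h''.1, h''.2]
    obtain ⟨p1, p2⟩ := orbpos M hM1 hM2 n
    have hIp : Imap d ((Fmap d)^[n] M) = Imap d M := orbinv M hM1 hM2 n
    have hfin := stable_main hd hl hl3 hB hepos he1 hε'pos.le hε'a hε'b heε hε p1 p2
      (by rw [Prod.mk.eta, hIp]; exact hIM)
    rwa [Prod.mk.eta] at hfin
end

section
/- For every d > 0 and every K > K_m, the projective cubic curve with homogeneous equation f(x,y,t) = x·y·(x+y) + (x+y)·t² + d·t³ − K·x·y·t = 0 has no real singular point: there is no (x,y,t) ∈ ℝ³ \ {(0,0,0)} at which all three partial derivatives ∂f/∂x, ∂f/∂y, ∂f/∂t vanish simultaneously. -/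
/-!
On the curve, `f_x - f_y = (y - x)(x + y - K t)`. On the branch `x + y = K t` the equations force
`x y = -t²` and then `f_t = 3 (K + d) t²`, so the point is `0`. On the diagonal `y = x` the point
has `t ≠ 0`, and `u = x / t` is a root of `u³ - u - d` with `K u = 3 u² + 1`. For `K > 0` this root
is positive, hence it is the unique positive root `ℓ`, which forces `K = 3ℓ + 1/ℓ = K_m`.
-/

noncomputable def fhom (d K : ℝ) (x y t : ℝ) : ℝ :=
  x * y * (x + y) + (x + y) * t ^ 2 + d * t ^ 3 - K * x * y * t

theorem hasDerivAt_cubic (a b c e x : ℝ) :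
    HasDerivAt (fun s : ℝ => a * s ^ 3 + b * s ^ 2 + c * s + e)
      (3 * a * x ^ 2 + 2 * b * x + c) x := by
  refine ((((hasDerivAt_pow 3 x).const_mul a).add ((hasDerivAt_pow 2 x).const_mul b)).add
    ((hasDerivAt_id' x).const_mul c)).add_const e |>.congr_deriv ?_
  norm_num
  ring

section PartialDerivatives

variable (d K x y t : ℝ)

theorem deriv_fhom_x :
    deriv (fun s : ℝ => fhom d K s y t) x = 2 * x * y + y ^ 2 + t ^ 2 - K * y * t := by
  have h : (fun s : ℝ => fhom d K s y t) =
      fun s => 0 * s ^ 3 + y * s ^ 2 + (y ^ 2 + t ^ 2 - K * y * t) * s + (y * t ^ 2 + d * t ^ 3) := by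
    funext s; simp only [fhom]; ring
  rw [h, (hasDerivAt_cubic _ _ _ _ x).deriv]
  ring

theorem deriv_fhom_y :
    deriv (fun s : ℝ => fhom d K x s t) y = x ^ 2 + 2 * x * y + t ^ 2 - K * x * t := by
  have h : (fun s : ℝ => fhom d K x s t) =
      fun s => 0 * s ^ 3 + x * s ^ 2 + (x ^ 2 + t ^ 2 - K * x * t) * s + (x * t ^ 2 + d * t ^ 3) := by
    funext s; simp only [fhom]; ring
  rw [h, (hasDerivAt_cubic _ _ _ _ y).deriv]
  ring

theorem deriv_fhom_t :
    deriv (fun s : ℝ => fhom d K x y s) t = 2 * (x + y) * t + 3 * d * t ^ 2 - K * x * y := by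
  have h : (fun s : ℝ => fhom d K x y s) =
      fun s => d * s ^ 3 + (x + y) * s ^ 2 + -(K * x * y) * s + x * y * (x + y) := by
    funext s; simp only [fhom]; ring
  rw [h, (hasDerivAt_cubic _ _ _ _ t).deriv]
  ring

end PartialDerivatives

theorem strictMonoOn_cube_sub_self : StrictMonoOn (fun u : ℝ => u ^ 3 - u) (Set.Ici 1) := by
  intro a (ha : 1 ≤ a) b (hb : 1 ≤ b) hab
  nlinarith [mul_pos (sub_pos.2 hab) (by nlinarith : (0 : ℝ) < a ^ 2 + a * b + b ^ 2 - 1)]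

theorem one_lt_of_cube_sub_self_pos_s5 {u : ℝ} (hu : 0 < u) (h : 0 < u ^ 3 - u) : 1 < u := by
  by_contra! hle
  nlinarith [mul_nonneg hu.le (sub_nonneg.2 hle), mul_nonneg (mul_nonneg hu.le hu.le) (sub_nonneg.2 hle)]

theorem eq_zero_of_singular_of_add_eq {d K x y t : ℝ} (hKd : K + d ≠ 0)
    (hxy : x + y = K * t)
    (hx : 2 * x * y + y ^ 2 + t ^ 2 - K * y * t = 0)
    (ht : 2 * (x + y) * t + 3 * d * t ^ 2 - K * x * y = 0) :
    x = 0 ∧ y = 0 ∧ t = 0 := by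
  have hprod : x * y = -t ^ 2 := by linear_combination hx - y * hxy
  have ht0 : t = 0 := by
    have : 3 * (K + d) * t ^ 2 = 0 := by linear_combination ht - 2 * t * hxy + K * hprod
    simpa [hKd] using this
  subst ht0
  have hy : y = -x := by linear_combination hxy
  subst hy
  have : x = 0 := by simpa using hprod
  exact ⟨this, by simp [this], rfl⟩

theorem exists_root_of_singular_of_eq {d K x t : ℝ} (hne : ¬(x = 0 ∧ t = 0))
    (hx : 3 * x ^ 2 + t ^ 2 - K * x * t = 0)
    (ht : 4 * x * t + 3 * d * t ^ 2 - K * x ^ 2 = 0) :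
    ∃ u : ℝ, u ^ 3 - u - d = 0 ∧ K * u = 3 * u ^ 2 + 1 := by
  have ht0 : t ≠ 0 := by
    rintro rfl
    exact hne ⟨by nlinarith, rfl⟩
  have ht2 : t ^ 2 ≠ 0 := pow_ne_zero 2 ht0
  obtain ⟨u, rfl⟩ : ∃ u, x = u * t := ⟨x / t, (div_mul_cancel₀ x ht0).symm⟩
  have hKu : K * u = 3 * u ^ 2 + 1 := by
    have : (K * u - (3 * u ^ 2 + 1)) * t ^ 2 = 0 := by linear_combination -hx
    linear_combination (mul_eq_zero.1 this).resolve_right ht2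
  have hKu2 : K * u ^ 2 = 4 * u + 3 * d := by
    have : (K * u ^ 2 - (4 * u + 3 * d)) * t ^ 2 = 0 := by linear_combination -ht
    linear_combination (mul_eq_zero.1 this).resolve_right ht2
  exact ⟨u, by linear_combination hKu2 / 3 - u / 3 * hKu, hKu⟩

theorem exists_root_of_singular {d K x y t : ℝ} (hKd : K + d ≠ 0)
    (hne : (x, y, t) ≠ ((0 : ℝ), (0 : ℝ), (0 : ℝ)))
    (hx : 2 * x * y + y ^ 2 + t ^ 2 - K * y * t = 0)
    (hy : x ^ 2 + 2 * x * y + t ^ 2 - K * x * t = 0)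
    (ht : 2 * (x + y) * t + 3 * d * t ^ 2 - K * x * y = 0) :
    ∃ u : ℝ, u ^ 3 - u - d = 0 ∧ K * u = 3 * u ^ 2 + 1 := by
  have hne' : ¬(x = 0 ∧ y = 0 ∧ t = 0) := by
    rintro ⟨rfl, rfl, rfl⟩
    exact hne rfl
  have hfac : (y - x) * (x + y - K * t) = 0 := by linear_combination hx - hy
  rcases mul_eq_zero.1 hfac with hdiag | hbranch
  · obtain rfl : y = x := by linear_combination hdiag
    refine exists_root_of_singular_of_eq (fun h => hne' ⟨h.1, h.1, h.2⟩) ?_ ?_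
    · linear_combination hx
    · linear_combination ht
  · exact absurd (eq_zero_of_singular_of_add_eq hKd (by linear_combination hbranch) hx ht) hne'

/-- For `d > 0` and `K > K_m = 3ℓ + 1/ℓ`, the projective cubic
`f(x,y,t) = 0` has no real singular point: the three partial derivatives of `f` never
vanish simultaneously at a nonzero real point. -/
theorem stmt_5 (d l : ℝ) (hd : 0 < d) (hl : 0 < l) (hl3 : l ^ 3 - l - d = 0)
    (K : ℝ) (hK : 3 * l + 1 / l < K) :
    ¬ ∃ x y t : ℝ, (x, y, t) ≠ ((0 : ℝ), (0 : ℝ), (0 : ℝ)) ∧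
      deriv (fun s : ℝ => fhom d K s y t) x = 0 ∧
      deriv (fun s : ℝ => fhom d K x s t) y = 0 ∧
      deriv (fun s : ℝ => fhom d K x y s) t = 0 := by
  rintro ⟨x, y, t, hne, hx, hy, ht⟩
  rw [deriv_fhom_x] at hx
  rw [deriv_fhom_y] at hy
  rw [deriv_fhom_t] at ht
  have hK0 : 0 < K := lt_trans (by positivity) hK
  obtain ⟨u, hu3, hKu⟩ := exists_root_of_singular (by positivity) hne hx hy ht
  have hu : 0 < u := pos_of_mul_pos_right (hKu ▸ by positivity) hK0.le
  have hul : u = l :=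
    strictMonoOn_cube_sub_self.injOn
      (one_lt_of_cube_sub_self_pos_s5 hu (by linarith)).le
      (one_lt_of_cube_sub_self_pos_s5 hl (by linarith)).le
      (by linarith)
  subst hul
  refine lt_irrefl (K * u) ?_
  calc K * u = (3 * u + 1 / u) * u := by rw [hKu]; field_simp
    _ < K * u := mul_lt_mul_of_pos_right hK hu
end

section
/- For every d > 0 and every point M ∈ (0,∞)², if F²(M) = M, or F³(M) = M, or F⁴(M) = M, then M = L. In other words, the only solutions of the system that are periodic with period 2, 3 or 4 are the constant solution equal to the equilibrium L. -/
private lemma step (d x y : ℝ) (hd : 0 < d) (hx : 0 < x) (hy : 0 < y) :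
    ∃ x' y', Fmap d (x, y) = (x', y') ∧ 0 < x' ∧ 0 < y' ∧
      x' * y * x = y + d ∧ y' * x' * y = x' + d := by
  have h1 : x ≠ 0 := hx.ne'
  have h2 : y ≠ 0 := hy.ne'
  have h3 : y + d ≠ 0 := by positivity
  refine ⟨(y + d) / (x * y), (d*x*y + y + d) / (y*(y+d)), rfl, by positivity, by positivity,
    ?_, ?_⟩
  · field_simp
  · field_simp; ring

private lemma log3 {a b c v : ℝ} (ha : 0 < a) (hb : 0 < b) (hc : 0 < c)
    (h : a * b * c = v) : Real.log a + Real.log b + Real.log c = Real.log v := by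
  subst h
  rw [Real.log_mul (by positivity) hc.ne', Real.log_mul ha.ne' hb.ne']

private lemma logAux {dd x y : ℝ} (hd : 0 < dd) (hy : 0 < y) (hxy : y ≤ x) :
    0 ≤ Real.log (x+dd) - Real.log (y+dd) ∧
    Real.log (x+dd) - Real.log (y+dd) ≤ Real.log x - Real.log y := by
  have hx : 0 < x := lt_of_lt_of_le hy hxy
  constructor
  · have := Real.log_le_log (by positivity : (0:ℝ) < y + dd) (by linarith : y + dd ≤ x + dd)
    linarith
  · have key : (x+dd)*y ≤ (y+dd)*x := by nlinarith
    have h1 : Real.log ((x+dd)*y) ≤ Real.log ((y+dd)*x) := Real.log_le_log (by positivity) key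
    rw [Real.log_mul (by positivity) hy.ne', Real.log_mul (by positivity) hx.ne'] at h1
    linarith

private lemma logIneq {dd x y : ℝ} (hd : 0 < dd) (hx : 0 < x) (hy : 0 < y) :
    0 ≤ (Real.log (x+dd) - Real.log (y+dd)) *
      ((Real.log x - Real.log y) - (Real.log (x+dd) - Real.log (y+dd))) := by
  rcases le_total y x with h | h
  · obtain ⟨ha, hb⟩ := logAux hd hy h
    exact mul_nonneg ha (by linarith)
  · obtain ⟨ha, hb⟩ := logAux hd hx h
    nlinarith

private lemma root_unique {d l a : ℝ} (hd : 0 < d) (hl : 0 < l) (ha : 0 < a)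
    (hl3 : l ^ 3 - l - d = 0) (ha3 : a * a * a = a + d) : a = l := by
  have hl1 : 1 < l := by nlinarith [mul_pos hl hl, mul_pos (mul_pos hl hl) hl]
  have ha1 : 1 < a := by nlinarith [mul_pos ha ha, mul_pos (mul_pos ha ha) ha]
  have key : (a - l) * (a * a + a * l + l * l - 1) = 0 := by linear_combination ha3 - hl3
  rcases mul_eq_zero.mp key with h | h
  · linarith
  · nlinarith

private lemma per4 {d l w0 w1 w2 w3 : ℝ} (hd : 0 < d) (hl : 0 < l) (hl3 : l ^ 3 - l - d = 0)
    (h0 : 0 < w0) (h1 : 0 < w1)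
    (e1 : w2 * w1 * w0 = w1 + d) (e2 : w3 * w2 * w1 = w2 + d)
    (e3 : w0 * w3 * w2 = w3 + d) (e4 : w1 * w0 * w3 = w0 + d) :
    w0 = l ∧ w1 = l := by
  have hb : w3 = w1 := by
    have key : (w3 - w1) * d = 0 := by linear_combination w1 * e3 - w3 * e1
    rcases mul_eq_zero.mp key with h | h
    · linarith
    · exact absurd h hd.ne'
  have ha : w2 = w0 := by
    have key : (w2 - w0) * d = 0 := by linear_combination w0 * e2 - w2 * e4
    rcases mul_eq_zero.mp key with h | h
    · linarith
    · exact absurd h hd.ne'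
  rw [hb] at e4
  rw [ha] at e1
  have hab : w0 = w1 := by
    have key : (w0 - w1) * (w0 * w1 + 1) = 0 := by linear_combination e1 - e4
    rcases mul_eq_zero.mp key with h | h
    · linarith
    · nlinarith [mul_pos h0 h1]
  rw [← hab] at e1
  have hr : w0 = l := root_unique hd hl h0 hl3 (by linarith [e1])
  exact ⟨hr, hab ▸ hr⟩

private lemma killer3 {p q r : ℝ}
    (h0 : 0 ≤ (p + q - r) * (p - (p + q - r)))
    (h1 : 0 ≤ (p + q + r) * (q - (p + q + r)))
    (h2 : 0 ≤ (-p + q + r) * (r - (-p + q + r))) :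
    p = 0 ∧ q = 0 ∧ r = 0 := by
  have hs : (p - q + r) ^ 2 ≤ 0 := by
    nlinarith [sq_nonneg (p + q - r), sq_nonneg (p + q + r), sq_nonneg (-p + q + r)]
  have hs0 : p - q + r = 0 := by
    have h := le_antisymm hs (sq_nonneg _)
    exact sq_eq_zero_iff.mp h
  have m1 : q * (p - q + r) = 0 := by rw [hs0, mul_zero]
  have m2 : (p + q + r) * (p - q + r) = 0 := by rw [hs0, mul_zero]
  have hq2 : q ^ 2 ≤ 0 := by nlinarith
  have hq : q = 0 := sq_eq_zero_iff.mp (le_antisymm hq2 (sq_nonneg _))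
  have hpr : p + r = 0 := by rw [hq] at hs0; linarith
  have z1 : q * p = 0 := by rw [hq, zero_mul]
  have z2 : q * r = 0 := by rw [hq, zero_mul]
  have z3 : q * q = 0 := by rw [hq, zero_mul]
  have m3 : r * (p + r) = 0 := by rw [hpr, mul_zero]
  have hr2 : r ^ 2 ≤ 0 := by nlinarith
  have hr : r = 0 := sq_eq_zero_iff.mp (le_antisymm hr2 (sq_nonneg _))
  exact ⟨by linarith, hq, hr⟩

private lemma killer4 {p q r s : ℝ}
    (h0 : 0 ≤ (p + q - s) * (p - (p + q - s)))
    (h1 : 0 ≤ (p + q + r) * (q - (p + q + r)))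
    (h2 : 0 ≤ (q + r + s) * (r - (q + r + s)))
    (h3 : 0 ≤ (r + s - p) * (s - (r + s - p))) :
    p = 0 ∧ q = 0 ∧ r = 0 ∧ s = 0 := by
  have hs : p^2 + q^2 + r^2 + s^2 ≤ 0 := by
    nlinarith [sq_nonneg (p + q - s), sq_nonneg (p + q + r), sq_nonneg (q + r + s),
      sq_nonneg (r + s - p)]
  refine ⟨?_, ?_, ?_, ?_⟩ <;>
  · apply sq_eq_zero_iff.mp
    apply le_antisymm _ (sq_nonneg _)
    nlinarith [sq_nonneg p, sq_nonneg q, sq_nonneg r, sq_nonneg s]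

private lemma expinj {x y : ℝ} (hx : 0 < x) (hy : 0 < y) (h : Real.log x = Real.log y) :
    x = y := by
  rw [← Real.exp_log hx, ← Real.exp_log hy, h]

private lemma case2 {d l w0 w1 : ℝ} (hd : 0 < d) (hl : 0 < l) (hl3 : l ^ 3 - l - d = 0)
    (h0 : 0 < w0) (h1 : 0 < w1)
    (h : Fmap d (Fmap d (w0, w1)) = (w0, w1)) : w0 = l ∧ w1 = l := by
  obtain ⟨w2, w3, hF1, p2, p3, e1, e2⟩ := step d w0 w1 hd h0 h1
  obtain ⟨w4, w5, hF2, p4, p5, e3, e4⟩ := step d w2 w3 hd p2 p3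
  rw [hF1, hF2] at h
  injection h with h4 h5
  rw [h4] at e3
  rw [h5, h4] at e4
  exact per4 hd hl hl3 h0 h1 e1 e2 e3 e4

private lemma case3 {d l w0 w1 : ℝ} (hd : 0 < d) (hl : 0 < l) (hl3 : l ^ 3 - l - d = 0)
    (h0 : 0 < w0) (h1 : 0 < w1)
    (h : Fmap d (Fmap d (Fmap d (w0, w1))) = (w0, w1)) : w0 = l ∧ w1 = l := by
  obtain ⟨w2, w3, hF1, p2, p3, e1, e2⟩ := step d w0 w1 hd h0 h1
  obtain ⟨w4, w5, hF2, p4, p5, e3, e4⟩ := step d w2 w3 hd p2 p3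
  obtain ⟨w6, w7, hF3, p6, p7, e5, e6⟩ := step d w4 w5 hd p4 p5
  rw [hF1, hF2, hF3] at h
  injection h with h6 h7
  rw [h6] at e5
  rw [h7, h6] at e6
  -- now: e1 : w2*w1*w0 = w1+d, e2 : w3*w2*w1 = w2+d, e3 : w4*w3*w2 = w3+d,
  -- e4 : w5*w4*w3 = w4+d, e5 : w0*w5*w4 = w5+d, e6 : w1*w0*w5 = w0+d
  have l1 := log3 p2 h1 h0 e1
  have l2 := log3 p3 p2 h1 e2
  have l3 := log3 p4 p3 p2 e3
  have l4 := log3 p5 p4 p3 e4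
  have l5 := log3 h0 p5 p4 e5
  have l6 := log3 h1 h0 p5 e6
  have I0 := logIneq hd h0 p3
  have I1 := logIneq hd h1 p4
  have I2 := logIneq hd p2 p5
  have t0 : Real.log (w0+d) - Real.log (w3+d)
      = (Real.log w0 - Real.log w3) + (Real.log w1 - Real.log w4)
        - (Real.log w2 - Real.log w5) := by linarith
  have t1 : Real.log (w1+d) - Real.log (w4+d)
      = (Real.log w0 - Real.log w3) + (Real.log w1 - Real.log w4)
        + (Real.log w2 - Real.log w5) := by linarith
  have t2 : Real.log (w2+d) - Real.log (w5+d)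
      = -(Real.log w0 - Real.log w3) + (Real.log w1 - Real.log w4)
        + (Real.log w2 - Real.log w5) := by linarith
  rw [t0] at I0
  rw [t1] at I1
  rw [t2] at I2
  obtain ⟨hp, hq, hr⟩ := killer3 I0 I1 I2
  have w03 : w0 = w3 := expinj h0 p3 (by linarith)
  have w14 : w1 = w4 := expinj h1 p4 (by linarith)
  have w25 : w2 = w5 := expinj p2 p5 (by linarith)
  rw [← w03] at e2
  rw [← w14, ← w03] at e3
  -- e1 : w2*w1*w0 = w1+d, e2 : w0*w2*w1 = w2+d, e3 : w1*w0*w2 = w0+d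
  have h12 : w1 = w2 := by linear_combination e2 - e1
  have h01 : w0 = w1 := by linear_combination e1 - e3
  rw [← h12, ← h01] at e1
  exact ⟨root_unique hd hl h0 hl3 (by linarith [e1]), by
    have := root_unique hd hl h0 hl3 (by linarith [e1]); linarith⟩

private lemma case4 {d l w0 w1 : ℝ} (hd : 0 < d) (hl : 0 < l) (hl3 : l ^ 3 - l - d = 0)
    (h0 : 0 < w0) (h1 : 0 < w1)
    (h : Fmap d (Fmap d (Fmap d (Fmap d (w0, w1)))) = (w0, w1)) : w0 = l ∧ w1 = l := by
  obtain ⟨w2, w3, hF1, p2, p3, e1, e2⟩ := step d w0 w1 hd h0 h1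
  obtain ⟨w4, w5, hF2, p4, p5, e3, e4⟩ := step d w2 w3 hd p2 p3
  obtain ⟨w6, w7, hF3, p6, p7, e5, e6⟩ := step d w4 w5 hd p4 p5
  obtain ⟨w8, w9, hF4, p8, p9, e7, e8⟩ := step d w6 w7 hd p6 p7
  rw [hF1, hF2, hF3, hF4] at h
  injection h with h8 h9
  rw [h8] at e7
  rw [h9, h8] at e8
  -- e1 : w2*w1*w0 = w1+d, ..., e7 : w0*w7*w6 = w7+d, e8 : w1*w0*w7 = w0+d
  have l1 := log3 p2 h1 h0 e1
  have l2 := log3 p3 p2 h1 e2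
  have l3 := log3 p4 p3 p2 e3
  have l4 := log3 p5 p4 p3 e4
  have l5 := log3 p6 p5 p4 e5
  have l6 := log3 p7 p6 p5 e6
  have l7 := log3 h0 p7 p6 e7
  have l8 := log3 h1 h0 p7 e8
  have I0 := logIneq hd h0 p4
  have I1 := logIneq hd h1 p5
  have I2 := logIneq hd p2 p6
  have I3 := logIneq hd p3 p7
  have t0 : Real.log (w0+d) - Real.log (w4+d)
      = (Real.log w0 - Real.log w4) + (Real.log w1 - Real.log w5)
        - (Real.log w3 - Real.log w7) := by linarith
  have t1 : Real.log (w1+d) - Real.log (w5+d)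
      = (Real.log w0 - Real.log w4) + (Real.log w1 - Real.log w5)
        + (Real.log w2 - Real.log w6) := by linarith
  have t2 : Real.log (w2+d) - Real.log (w6+d)
      = (Real.log w1 - Real.log w5) + (Real.log w2 - Real.log w6)
        + (Real.log w3 - Real.log w7) := by linarith
  have t3 : Real.log (w3+d) - Real.log (w7+d)
      = (Real.log w2 - Real.log w6) + (Real.log w3 - Real.log w7)
        - (Real.log w0 - Real.log w4) := by linarith
  rw [t0] at I0
  rw [t1] at I1
  rw [t2] at I2
  rw [t3] at I3
  obtain ⟨hp, hq, hr, hs⟩ := killer4 I0 I1 I2 I3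
  have w04 : w0 = w4 := expinj h0 p4 (by linarith)
  have w15 : w1 = w5 := expinj h1 p5 (by linarith)
  rw [← w04] at e3
  rw [← w15, ← w04] at e4
  -- e1 : w2*w1*w0 = w1+d, e2 : w3*w2*w1 = w2+d, e3 : w0*w3*w2 = w3+d, e4 : w1*w0*w3 = w0+d
  exact per4 hd hl hl3 h0 h1 e1 e2 e3 e4

/-- For every `d > 0`, the only point of `(0,∞)²` which is periodic of
period 2, 3 or 4 under `F` is the equilibrium `L = (ℓ,ℓ)`. -/
theorem stmt_6 (d l : ℝ) (hd : 0 < d) (hl : 0 < l) (hl3 : l ^ 3 - l - d = 0) :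
    ∀ M : ℝ × ℝ, 0 < M.1 → 0 < M.2 →
      ((Fmap d)^[2] M = M ∨ (Fmap d)^[3] M = M ∨ (Fmap d)^[4] M = M) →
      M = (l, l) := by
  intro M hM1 hM2 hper
  obtain ⟨w0, w1⟩ := M
  have h0 : 0 < w0 := hM1
  have h1 : 0 < w1 := hM2
  rcases hper with h | h | h
  · obtain ⟨a, b⟩ := case2 hd hl hl3 h0 h1 h
    rw [a, b]
  · obtain ⟨a, b⟩ := case3 hd hl hl3 h0 h1 h
    rw [a, b]
  · obtain ⟨a, b⟩ := case4 hd hl hl3 h0 h1 h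
    rw [a, b]
end

section
/- For every d > 0 and every K > K_m, the cubic polynomial P(t) = 2t³ − K·t² + 2t + d has exactly three real roots f₁ < f₂ < f₃, and they satisfy −d/2 < f₁ < 0 < f₂ < ℓ < f₃ < K/2. Moreover, as K → +∞ one has the asymptotics f₁·√(K/d) → −1, f₂·√(K/d) → 1, and K·(f₃ − K/2) → −2. -/
/-!
The values `P(-d/2) < 0 < P(0)`, `P(ℓ) = ℓ² (K_m - K) < 0` (using `ℓ³ = ℓ + d`) and
`P(K/2) = K + d > 0` produce a root in each of `(-d/2, 0)`, `(0, ℓ)`, `(ℓ, K/2)`, and a cubic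
has no others. For the asymptotics, a root `x` satisfies `x² K = 2x³ + 2x + d`: the two roots
below `ℓ` are therefore `O(K^{-1/2})` and `x² K / d = 1 + 2x(x² + 1)/d → 1`, while the large
root `c` satisfies `K = 2c + 2/c + d/c²`, so that
`K (c - K/2) = -(1 + c⁻² + d c⁻³/2)(2 + d/c) → -2`.
-/

open Filter Topology

section Roots

variable {R : Type*} [CommRing R] [IsDomain R]

theorem quadratic_coeffs_eq_zero_of_three_roots {p q r a b c : R}
    (hab : a ≠ b) (hbc : b ≠ c) (hac : a ≠ c)
    (ha : p * a ^ 2 + q * a + r = 0) (hb : p * b ^ 2 + q * b + r = 0)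
    (hc : p * c ^ 2 + q * c + r = 0) :
    p = 0 ∧ q = 0 ∧ r = 0 := by
  have hab' : p * (a + b) + q = 0 := by
    refine (mul_eq_zero.mp ?_).resolve_left (sub_ne_zero.mpr hab)
    linear_combination ha - hb
  have hbc' : p * (b + c) + q = 0 := by
    refine (mul_eq_zero.mp ?_).resolve_left (sub_ne_zero.mpr hbc)
    linear_combination hb - hc
  have hp : p = 0 := by
    refine (mul_eq_zero.mp ?_).resolve_left (sub_ne_zero.mpr hac)
    linear_combination hab' - hbc'
  have hq : q = 0 := by linear_combination hab' - (a + b) * hp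
  exact ⟨hp, hq, by linear_combination ha - a ^ 2 * hp - a * hq⟩

theorem cubic_eq_mul_of_three_roots {α β γ δ a b c : R}
    (hab : a ≠ b) (hbc : b ≠ c) (hac : a ≠ c)
    (ha : α * a ^ 3 + β * a ^ 2 + γ * a + δ = 0)
    (hb : α * b ^ 3 + β * b ^ 2 + γ * b + δ = 0)
    (hc : α * c ^ 3 + β * c ^ 2 + γ * c + δ = 0) (t : R) :
    α * t ^ 3 + β * t ^ 2 + γ * t + δ = α * (t - a) * (t - b) * (t - c) := by
  -- the difference of the two sides is a quadratic vanishing at `a`, `b`, `c`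
  obtain ⟨hp, hq, hr⟩ := quadratic_coeffs_eq_zero_of_three_roots
    (p := β + α * (a + b + c)) (q := γ - α * (a * b + b * c + c * a)) (r := δ + α * a * b * c)
    hab hbc hac (by linear_combination ha) (by linear_combination hb) (by linear_combination hc)
  linear_combination t ^ 2 * hp + t * hq + hr

end Roots

def cubic (d K t : ℝ) : ℝ := 2 * t ^ 3 - K * t ^ 2 + 2 * t + d

section Cubic

variable {d K : ℝ}

theorem cubic_neg_half_lt_zero (hd : 0 < d) (hK : 0 ≤ K) : cubic d K (-d / 2) < 0 := by
  unfold cubic; nlinarith [pow_pos hd 3, mul_nonneg hK (sq_nonneg d)]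

theorem cubic_zero : cubic d K 0 = d := by simp [cubic]

theorem cubic_lt_zero_of_three_mul_add_inv_lt {l : ℝ} (hl : 0 < l) (hl3 : l ^ 3 - l - d = 0)
    (hK : 3 * l + 1 / l < K) : cubic d K l < 0 := by
  have h : cubic d K l = l ^ 2 * (3 * l + 1 / l - K) := by
    have hl1 : l ^ 2 * (1 / l) = l := by field_simp
    unfold cubic; linear_combination -hl3 - hl1
  rw [h]
  exact mul_neg_of_pos_of_neg (by positivity) (by linarith)

theorem cubic_half : cubic d K (K / 2) = K + d := by unfold cubic; ring

theorem exists_three_roots {l : ℝ} (hd : 0 < d) (hl : 0 < l) (hl3 : l ^ 3 - l - d = 0)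
    (hK : 3 * l + 1 / l < K) :
    ∃ a b c : ℝ, -d / 2 < a ∧ a < 0 ∧ 0 < b ∧ b < l ∧ l < c ∧ c < K / 2 ∧
      ∀ t, cubic d K t = 0 ↔ t = a ∨ t = b ∨ t = c := by
  have hlK : 2 * l < K := by linarith [one_div_pos.mpr hl]
  have hcont : Continuous (cubic d K) := by unfold cubic; fun_prop
  have h0 : 0 < cubic d K 0 := by rwa [cubic_zero]
  obtain ⟨a, ⟨ha₁, ha₂⟩, ha⟩ := intermediate_value_Ioo (by linarith) hcont.continuousOn
    ⟨cubic_neg_half_lt_zero hd (by linarith), h0⟩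
  obtain ⟨b, ⟨hb₁, hb₂⟩, hb⟩ := intermediate_value_Ioo' hl.le hcont.continuousOn
    ⟨cubic_lt_zero_of_three_mul_add_inv_lt hl hl3 hK, h0⟩
  obtain ⟨c, ⟨hc₁, hc₂⟩, hc⟩ := intermediate_value_Ioo (b := K / 2) (by linarith)
    hcont.continuousOn
    ⟨cubic_lt_zero_of_three_mul_add_inv_lt hl hl3 hK, by rw [cubic_half]; linarith⟩
  unfold cubic at ha hb hc
  have hfac (t : ℝ) : cubic d K t = 2 * (t - a) * (t - b) * (t - c) := by
    unfold cubic
    linear_combination cubic_eq_mul_of_three_roots (α := 2) (β := -K) (γ := 2) (δ := d)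
      (a := a) (b := b) (c := c) (by linarith) (by linarith) (by linarith)
      (by linear_combination ha) (by linear_combination hb) (by linear_combination hc) t
  refine ⟨a, b, c, ha₁, ha₂, hb₁, hb₂, hc₁, hc₂, fun t => ?_⟩
  simp [hfac, sub_eq_zero, or_assoc]

theorem sq_mul_div_eq_of_cubic_eq_zero {x : ℝ} (hd : d ≠ 0) (h : cubic d K x = 0) :
    x ^ 2 * (K / d) = 1 + 2 * x * (x ^ 2 + 1) / d := by
  unfold cubic at h
  field_simp
  linear_combination -h

theorem sq_le_of_cubic_eq_zero {x B : ℝ} (hK : 0 < K) (h : cubic d K x = 0) (hxB : x ≤ B) :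
    x ^ 2 ≤ (2 * B ^ 3 + 2 * B + d) / K := by
  unfold cubic at h
  rw [le_div_iff₀ hK]
  nlinarith [mul_nonneg (sub_nonneg.mpr hxB) (add_nonneg (sq_nonneg (x + B / 2)) (sq_nonneg B))]

theorem eq_of_cubic_eq_zero {c : ℝ} (hc : c ≠ 0) (h : cubic d K c = 0) :
    K = 2 * c + 2 * c⁻¹ + d * c⁻¹ ^ 2 := by
  unfold cubic at h
  field_simp
  linear_combination -h

theorem mul_sub_half_eq_of_cubic_eq_zero {c : ℝ} (hc : c ≠ 0) (h : cubic d K c = 0) :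
    K * (c - K / 2) = -((1 + c⁻¹ ^ 2 + d / 2 * c⁻¹ ^ 3) * (2 + d * c⁻¹)) := by
  rw [eq_of_cubic_eq_zero hc h]
  field_simp
  ring

theorem tendsto_zero_of_cubic_eq_zero {x : ℝ → ℝ} {B : ℝ}
    (hroot : ∀ᶠ K in atTop, cubic d K (x K) = 0) (hB : ∀ᶠ K in atTop, x K ≤ B) :
    Tendsto x atTop (𝓝 0) := by
  rw [tendsto_zero_iff_abs_tendsto_zero]
  have hlim : Tendsto (fun K => Real.sqrt ((2 * B ^ 3 + 2 * B + d) / K)) atTop (𝓝 0) := by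
    simpa using (tendsto_const_nhds.div_atTop tendsto_id).sqrt
  refine squeeze_zero' (Eventually.of_forall fun K => abs_nonneg _) ?_ hlim
  filter_upwards [hroot, hB, eventually_gt_atTop 0] with K h hxB hK
  exact Real.abs_le_sqrt (sq_le_of_cubic_eq_zero hK h hxB)

theorem tendsto_abs_mul_sqrt_of_cubic_eq_zero {x : ℝ → ℝ} (hd : d ≠ 0)
    (hroot : ∀ᶠ K in atTop, cubic d K (x K) = 0) (hx : Tendsto x atTop (𝓝 0)) :
    Tendsto (fun K => |x K| * Real.sqrt (K / d)) atTop (𝓝 1) := by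
  have hcont : Continuous fun y : ℝ => Real.sqrt (1 + 2 * y * (y ^ 2 + 1) / d) := by fun_prop
  refine ((hcont.tendsto' 0 1 (by simp)).comp hx).congr' ?_
  filter_upwards [hroot] with K h
  rw [Function.comp_apply, ← sq_mul_div_eq_of_cubic_eq_zero hd h, Real.sqrt_mul (sq_nonneg _),
    Real.sqrt_sq_eq_abs]

theorem tendsto_atTop_of_cubic_eq_zero {c : ℝ → ℝ} {B : ℝ} (hd : 0 ≤ d) (hB : 0 < B)
    (hroot : ∀ᶠ K in atTop, cubic d K (c K) = 0) (hcB : ∀ᶠ K in atTop, B ≤ c K) :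
    Tendsto c atTop atTop := by
  have hlim : Tendsto (fun K : ℝ => (K - (2 * B⁻¹ + d * B⁻¹ ^ 2)) / 2) atTop atTop :=
    (tendsto_atTop_add_const_right _ _ tendsto_id).atTop_div_const two_pos
  refine tendsto_atTop_mono' _ ?_ hlim
  filter_upwards [hroot, hcB] with K h hcK
  have hc : 0 < c K := hB.trans_le hcK
  have hinv : (c K)⁻¹ ≤ B⁻¹ := inv_anti₀ hB hcK
  have hinv2 : (c K)⁻¹ ^ 2 ≤ B⁻¹ ^ 2 := pow_le_pow_left₀ (inv_nonneg.mpr hc.le) hinv 2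
  linarith [eq_of_cubic_eq_zero hc.ne' h, mul_le_mul_of_nonneg_left hinv2 hd]

theorem tendsto_mul_sub_half_of_cubic_eq_zero {c : ℝ → ℝ}
    (hroot : ∀ᶠ K in atTop, cubic d K (c K) = 0) (hc : Tendsto c atTop atTop) :
    Tendsto (fun K => K * (c K - K / 2)) atTop (𝓝 (-2)) := by
  have hcont : Continuous fun y : ℝ => -((1 + y ^ 2 + d / 2 * y ^ 3) * (2 + d * y)) := by
    fun_prop
  refine ((hcont.tendsto' 0 (-2) (by norm_num)).comp (tendsto_inv_atTop_zero.comp hc)).congr' ?_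
  filter_upwards [hroot, hc.eventually_gt_atTop 0] with K h hcK
  rw [Function.comp_apply, Function.comp_apply, mul_sub_half_eq_of_cubic_eq_zero hcK.ne' h]

end Cubic

/-- For `d > 0` and `K > K_m`, the cubic `P(t) = 2t³ − Kt² + 2t + d` has
exactly three real roots `f₁ < f₂ < f₃` with `−d/2 < f₁ < 0 < f₂ < ℓ < f₃ < K/2`, and
as `K → +∞` one has `f₁·√(K/d) → −1`, `f₂·√(K/d) → 1` and `K·(f₃ − K/2) → −2`. -/
theorem stmt_8 (d l : ℝ) (hd : 0 < d) (hl : 0 < l) (hl3 : l ^ 3 - l - d = 0) :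
    ∃ f₁ f₂ f₃ : ℝ → ℝ,
      (∀ K : ℝ, 3 * l + 1 / l < K →
        (∀ t : ℝ, 2 * t ^ 3 - K * t ^ 2 + 2 * t + d = 0 ↔
          (t = f₁ K ∨ t = f₂ K ∨ t = f₃ K)) ∧
        f₁ K < f₂ K ∧ f₂ K < f₃ K ∧
        -d / 2 < f₁ K ∧ f₁ K < 0 ∧ 0 < f₂ K ∧ f₂ K < l ∧ l < f₃ K ∧ f₃ K < K / 2) ∧
      Tendsto (fun K : ℝ => f₁ K * Real.sqrt (K / d)) atTop (nhds (-1)) ∧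
      Tendsto (fun K : ℝ => f₂ K * Real.sqrt (K / d)) atTop (nhds 1) ∧
      Tendsto (fun K : ℝ => K * (f₃ K - K / 2)) atTop (nhds (-2)) := by
  choose! f₁ f₂ f₃ hf using fun K (hK : 3 * l + 1 / l < K) => exists_three_roots hd hl hl3 hK
  have hspec := (eventually_gt_atTop (3 * l + 1 / l)).mono hf
  have hroot₁ : ∀ᶠ K in atTop, cubic d K (f₁ K) = 0 :=
    hspec.mono fun _ ⟨_, _, _, _, _, _, hiff⟩ => (hiff _).2 (Or.inl rfl)
  have hroot₂ : ∀ᶠ K in atTop, cubic d K (f₂ K) = 0 :=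
    hspec.mono fun _ ⟨_, _, _, _, _, _, hiff⟩ => (hiff _).2 (Or.inr (Or.inl rfl))
  have hroot₃ : ∀ᶠ K in atTop, cubic d K (f₃ K) = 0 :=
    hspec.mono fun _ ⟨_, _, _, _, _, _, hiff⟩ => (hiff _).2 (Or.inr (Or.inr rfl))
  refine ⟨f₁, f₂, f₃, fun K hK => ?_, ?_, ?_, ?_⟩
  · obtain ⟨h₁, h₂, h₃, h₄, h₅, h₆, hiff⟩ := hf K hK
    exact ⟨hiff, by linarith, by linarith, h₁, h₂, h₃, h₄, h₅, h₆⟩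
  · have hf₁ := tendsto_zero_of_cubic_eq_zero hroot₁ (hspec.mono fun _ ⟨_, h, _⟩ => h.le)
    refine (tendsto_abs_mul_sqrt_of_cubic_eq_zero hd.ne' hroot₁ hf₁).neg.congr'
      (hspec.mono fun K ⟨_, h, _⟩ => ?_)
    rw [abs_of_neg h, neg_mul, neg_neg]
  · have hf₂ :=
      tendsto_zero_of_cubic_eq_zero hroot₂ (hspec.mono fun _ ⟨_, _, _, h, _⟩ => h.le)
    refine (tendsto_abs_mul_sqrt_of_cubic_eq_zero hd.ne' hroot₂ hf₂).congr'
      (hspec.mono fun K ⟨_, _, h, _⟩ => ?_)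
    rw [abs_of_pos h]
  · exact tendsto_mul_sub_half_of_cubic_eq_zero hroot₃
      (tendsto_atTop_of_cubic_eq_zero hd.le hl hroot₃
        (hspec.mono fun _ ⟨_, _, _, _, h, _⟩ => h.le))
end

section
/- Let λ > 0, 0 < β < 1/2, and let ψ be a real-valued function defined for small ε > 0 with ψ(ε) → 0 as ε → 0⁺ and λ + ψ(ε) > 0. Define N(ε) = ∫₀^{(λ+ψ(ε))/ε^β} du/√((1+u²)(1+ε·u²)) and D(ε) = ∫₀^{+∞} du/√((1+u²)(1+ε·u²)). Then, as ε → 0⁺, D(ε) ~ (1/2)·ln(1/ε) and N(ε) ~ β·ln(1/ε) (i.e., the ratios D(ε)/((1/2)ln(1/ε)) and N(ε)/(β·ln(1/ε)) tend to 1). -/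
/-!
Split the range at `u = ε^{-1/2}`. Below that point the integrand lies between
`1/(1+u) - √ε/(1+√ε u)`, the derivative of `log ((1+u)/(1+√ε u))`, and `min(1, 1/u)`, so
`∫₀^b` differs from `log b` by at most `1` whenever `1 ≤ b ≤ ε^{-1/2}`; beyond it the integrand
is at most `ε^{-1/2} u^{-2}`, so the tail contributes at most `1`. Taking `b = ε^{-1/2}` gives
`D(ε) = ½ log(1/ε) + O(1)`, and `b = (λ + ψ(ε)) ε^{-β}` lies in the admissible range because
`β < 1/2`, giving `N(ε) = β log(1/ε) + O(1)`.
-/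

open Filter MeasureTheory Real Set Asymptotics Topology

noncomputable def ellipticIntegrand (ε u : ℝ) : ℝ :=
  1 / √((1 + u ^ 2) * (1 + ε * u ^ 2))

section Integrand

variable {ε : ℝ}

theorem continuous_ellipticIntegrand (hε : 0 ≤ ε) : Continuous (ellipticIntegrand ε) :=
  continuous_const.div (by fun_prop) fun u => by positivity

theorem ellipticIntegrand_nonneg (u : ℝ) : 0 ≤ ellipticIntegrand ε u := by
  unfold ellipticIntegrand; positivity

theorem ellipticIntegrand_le_one (hε : 0 ≤ ε) (u : ℝ) : ellipticIntegrand ε u ≤ 1 := by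
  refine div_le_one_of_le₀ (one_le_sqrt.mpr ?_) (sqrt_nonneg _)
  nlinarith [sq_nonneg u, mul_nonneg hε (sq_nonneg u)]

theorem ellipticIntegrand_le_inv (hε : 0 ≤ ε) {u : ℝ} (hu : 0 < u) :
    ellipticIntegrand ε u ≤ u⁻¹ := by
  rw [ellipticIntegrand, one_div]
  refine inv_anti₀ hu ((le_sqrt hu.le (by positivity)).mpr ?_)
  nlinarith [sq_nonneg u, mul_nonneg hε (sq_nonneg u)]

theorem ellipticIntegrand_le_rpow (hε : 0 < ε) {u : ℝ} (hu : 0 < u) :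
    ellipticIntegrand ε u ≤ (√ε)⁻¹ * u ^ (-2 : ℝ) := by
  have hsq : √ε * u ^ 2 ≤ √((1 + u ^ 2) * (1 + ε * u ^ 2)) := by
    rw [show √ε * u ^ 2 = √(ε * (u ^ 2) ^ 2) by rw [sqrt_mul hε.le, sqrt_sq (by positivity)]]
    exact sqrt_le_sqrt (by nlinarith [sq_nonneg u, mul_nonneg hε.le (sq_nonneg (u ^ 2))])
  rw [ellipticIntegrand, one_div, rpow_neg hu.le, rpow_two, ← mul_inv]
  exact inv_anti₀ (by positivity) hsq

theorem inv_one_add_sub_le_ellipticIntegrand (hε : 0 ≤ ε) {u : ℝ} (hu : 0 ≤ u) :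
    (1 + u)⁻¹ - √ε * (1 + √ε * u)⁻¹ ≤ ellipticIntegrand ε u := by
  set a := √ε
  have ha : 0 ≤ a := sqrt_nonneg ε
  have h1 : 0 < 1 + u := by linarith
  have h2 : 0 < 1 + a * u := by positivity
  have hprod : √((1 + u ^ 2) * (1 + ε * u ^ 2)) ≤ (1 + u) * (1 + a * u) := by
    rw [← sqrt_sq (mul_pos h1 h2).le]
    refine sqrt_le_sqrt ?_
    rw [mul_pow, ← sq_sqrt hε]
    exact mul_le_mul (by nlinarith) (by nlinarith [mul_nonneg ha hu]) (by positivity) (sq_nonneg _)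
  calc (1 + u)⁻¹ - a * (1 + a * u)⁻¹ = (1 - a) * ((1 + u) * (1 + a * u))⁻¹ := by
        field_simp; ring
    _ ≤ ((1 + u) * (1 + a * u))⁻¹ := by
        nlinarith [inv_pos.mpr (mul_pos h1 h2)]
    _ ≤ ellipticIntegrand ε u := by
        rw [ellipticIntegrand, one_div]
        exact inv_anti₀ (by positivity) hprod

theorem integrableOn_ellipticIntegrand_Ioi (hε : 0 < ε) {M : ℝ} (hM : 0 < M) :
    IntegrableOn (ellipticIntegrand ε) (Ioi M) := by
  refine Integrable.mono'
    ((integrableOn_Ioi_rpow_of_lt (by norm_num : (-2 : ℝ) < -1) hM).const_mul (√ε)⁻¹)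
    (continuous_ellipticIntegrand hε.le).aestronglyMeasurable ?_
  filter_upwards [self_mem_ae_restrict measurableSet_Ioi] with u hu
  rw [norm_of_nonneg (ellipticIntegrand_nonneg u)]
  exact ellipticIntegrand_le_rpow hε (hM.trans hu)

theorem integrableOn_ellipticIntegrand_Ioi_zero (hε : 0 < ε) :
    IntegrableOn (ellipticIntegrand ε) (Ioi 0) := by
  rw [← Ioc_union_Ioi_eq_Ioi zero_le_one]
  exact ((continuous_ellipticIntegrand hε.le).integrableOn_Icc.mono_set Ioc_subset_Icc_self).union
    (integrableOn_ellipticIntegrand_Ioi hε one_pos)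

theorem log_sub_log_le_integral_ellipticIntegrand (hε : 0 ≤ ε) {T : ℝ} (hT : 0 ≤ T) :
    log (1 + T) - log (1 + √ε * T) ≤ ∫ u in Ioc 0 T, ellipticIntegrand ε u := by
  have hpos : ∀ u ∈ Icc 0 T, 0 < 1 + u ∧ 0 < 1 + √ε * u := fun u hu =>
    ⟨by linarith [hu.1], by have := hu.1; positivity⟩
  have hderiv : ∀ u ∈ uIcc 0 T, HasDerivAt (fun u => log (1 + u) - log (1 + √ε * u))
      ((1 + u)⁻¹ - √ε * (1 + √ε * u)⁻¹) u := by
    intro u hu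
    rw [uIcc_of_le hT] at hu
    have h₁ := ((hasDerivAt_id u).const_add 1).log (hpos u hu).1.ne'
    have h₂ := (((hasDerivAt_id u).const_mul √ε).const_add 1).log (hpos u hu).2.ne'
    simpa only [id, one_div, mul_one, one_mul, div_eq_mul_inv, Pi.sub_def] using h₁.sub h₂
  have hcont : ContinuousOn (fun u => (1 + u)⁻¹ - √ε * (1 + √ε * u)⁻¹) (uIcc 0 T) := by
    rw [uIcc_of_le hT]
    exact .sub (.inv₀ (by fun_prop) fun u hu => (hpos u hu).1.ne')
      (.mul continuousOn_const (.inv₀ (by fun_prop) fun u hu => (hpos u hu).2.ne'))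
  have hftc := intervalIntegral.integral_eq_sub_of_hasDerivAt hderiv
    (hcont.intervalIntegrable (μ := volume))
  have hmono := intervalIntegral.integral_mono_on hT (hcont.intervalIntegrable (μ := volume))
    ((continuous_ellipticIntegrand hε).intervalIntegrable 0 T)
    fun u hu => inv_one_add_sub_le_ellipticIntegrand hε hu.1
  rw [hftc, intervalIntegral.integral_of_le hT] at hmono
  simp only [add_zero, mul_zero, log_one, sub_zero] at hmono
  exact hmono

theorem integral_ellipticIntegrand_Ioc_le (hε : 0 ≤ ε) {T : ℝ} (hT : 1 ≤ T) :
    ∫ u in Ioc 0 T, ellipticIntegrand ε u ≤ 1 + log T := by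
  have hf : IntegrableOn (ellipticIntegrand ε) (Icc 0 T) :=
    (continuous_ellipticIntegrand hε).integrableOn_Icc
  rw [← Ioc_union_Ioc_eq_Ioc zero_le_one hT, setIntegral_union (Ioc_disjoint_Ioc_of_le le_rfl)
    measurableSet_Ioc (hf.mono_set (Ioc_subset_Icc_self.trans (Icc_subset_Icc_right hT)))
    (hf.mono_set (Ioc_subset_Icc_self.trans (Icc_subset_Icc_left zero_le_one)))]
  have hinv : IntegrableOn (fun u : ℝ => u⁻¹) (Ioc 1 T) :=
    (continuousOn_inv₀.mono fun u hu => (zero_lt_one.trans_le hu.1).ne').integrableOn_Icc.mono_set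
      Ioc_subset_Icc_self
  gcongr
  · calc ∫ u in Ioc 0 1, ellipticIntegrand ε u ≤ ∫ _ in Ioc (0 : ℝ) 1, (1 : ℝ) :=
          setIntegral_mono_on (hf.mono_set (Ioc_subset_Icc_self.trans (Icc_subset_Icc_right hT)))
            (by simp) measurableSet_Ioc fun u _ => ellipticIntegrand_le_one hε u
      _ = 1 := by simp
  · calc ∫ u in Ioc 1 T, ellipticIntegrand ε u ≤ ∫ u in Ioc 1 T, u⁻¹ :=
          setIntegral_mono_on (hf.mono_set (Ioc_subset_Icc_self.trans (Icc_subset_Icc_left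
            zero_le_one))) hinv measurableSet_Ioc
            fun u hu => ellipticIntegrand_le_inv hε (zero_lt_one.trans hu.1)
      _ = log T := by
          rw [← intervalIntegral.integral_of_le hT, integral_inv_of_pos one_pos
            (zero_lt_one.trans_le hT), div_one]

theorem integral_ellipticIntegrand_Ioi_inv_sqrt_le (hε : 0 < ε) :
    ∫ u in Ioi (√ε)⁻¹, ellipticIntegrand ε u ≤ 1 := by
  have hM : 0 < (√ε)⁻¹ := by positivity
  calc ∫ u in Ioi (√ε)⁻¹, ellipticIntegrand ε u ≤ ∫ u in Ioi (√ε)⁻¹, (√ε)⁻¹ * u ^ (-2 : ℝ) :=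
        setIntegral_mono_on (integrableOn_ellipticIntegrand_Ioi hε hM)
          ((integrableOn_Ioi_rpow_of_lt (by norm_num) hM).const_mul _) measurableSet_Ioi
          fun u hu => ellipticIntegrand_le_rpow hε (hM.trans hu)
    _ = 1 := by
        rw [integral_const_mul, integral_Ioi_rpow_of_lt (by norm_num) hM]
        norm_num [rpow_neg_one, (sqrt_pos.mpr hε).ne']

theorem abs_integral_ellipticIntegrand_Ioc_sub_log_le (hε : 0 ≤ ε) {b : ℝ} (hb : 1 ≤ b)
    (hεb : √ε * b ≤ 1) : |(∫ u in Ioc 0 b, ellipticIntegrand ε u) - log b| ≤ 1 := by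
  have hb0 : 0 < b := zero_lt_one.trans_le hb
  have hlower := log_sub_log_le_integral_ellipticIntegrand hε hb0.le
  have hlog_b : log b ≤ log (1 + b) := log_le_log hb0 (by linarith)
  have hlog_εb : log (1 + √ε * b) ≤ log 2 := log_le_log (by positivity) (by linarith)
  have := integral_ellipticIntegrand_Ioc_le hε hb
  rw [abs_le]
  constructor <;> linarith [log_two_lt_d9]

theorem abs_integral_ellipticIntegrand_Ioi_sub_log_le (hε : 0 < ε) (hε₁ : ε ≤ 1) :
    |(∫ u in Ioi 0, ellipticIntegrand ε u) - log (√ε)⁻¹| ≤ 2 := by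
  have hsqrt : 0 < √ε := sqrt_pos.mpr hε
  have hM : 1 ≤ (√ε)⁻¹ := one_le_inv₀ hsqrt |>.mpr (sqrt_le_one.mpr hε₁)
  have hf := integrableOn_ellipticIntegrand_Ioi_zero hε
  have hhead := abs_integral_ellipticIntegrand_Ioc_sub_log_le hε.le hM
    (mul_inv_cancel₀ hsqrt.ne').le
  have htail_nonneg : 0 ≤ ∫ u in Ioi (√ε)⁻¹, ellipticIntegrand ε u :=
    setIntegral_nonneg measurableSet_Ioi fun u _ => ellipticIntegrand_nonneg u
  have htail := integral_ellipticIntegrand_Ioi_inv_sqrt_le hε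
  rw [← Ioc_union_Ioi_eq_Ioi (zero_lt_one.trans_le hM).le, setIntegral_union
    Ioc_disjoint_Ioi_same measurableSet_Ioi (hf.mono_set Ioc_subset_Ioi_self)
    (integrableOn_ellipticIntegrand_Ioi hε (zero_lt_one.trans_le hM))]
  rw [abs_le] at hhead ⊢
  constructor <;> linarith [hhead.1, hhead.2]

end Integrand

theorem tendsto_div_nhds_one_of_isBigO_sub {α : Type*} {l : Filter α} {F g : α → ℝ}
    (hg : Tendsto g l atTop) (h : (fun x => F x - g x) =O[l] fun _ => (1 : ℝ)) :
    Tendsto (fun x => F x / g x) l (𝓝 1) :=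
  (isEquivalent_iff_tendsto_one (hg.eventually_ne_atTop 0)).mp <|
    h.trans_isLittleO ((isLittleO_one_left_iff ℝ).mpr (tendsto_abs_atTop_atTop.comp hg))

theorem tendsto_log_one_div_nhdsGT_zero : Tendsto (fun ε : ℝ => log (1 / ε)) (𝓝[>] 0) atTop := by
  refine (tendsto_neg_atBot_atTop.comp tendsto_log_nhdsGT_zero).congr fun ε => ?_
  rw [Function.comp_apply, one_div, log_inv]

theorem tendsto_integral_ellipticIntegrand_Ioi_div_log :
    Tendsto (fun ε => (∫ u in Ioi 0, ellipticIntegrand ε u) / ((1 / 2) * log (1 / ε)))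
      (𝓝[>] 0) (𝓝 1) := by
  refine tendsto_div_nhds_one_of_isBigO_sub
    (tendsto_log_one_div_nhdsGT_zero.const_mul_atTop one_half_pos) (IsBigO.of_bound 2 ?_)
  filter_upwards [Ioc_mem_nhdsGT zero_lt_one] with ε hε
  have hlog : log (√ε)⁻¹ = 1 / 2 * log (1 / ε) := by
    rw [log_inv, log_sqrt hε.1.le, log_div one_ne_zero hε.1.ne', log_one]
    ring
  rw [norm_one, mul_one, Real.norm_eq_abs, ← hlog]
  exact abs_integral_ellipticIntegrand_Ioi_sub_log_le hε.1 hε.2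

theorem tendsto_integral_ellipticIntegrand_Ioo_div_log {b : ℝ → ℝ} {c : ℝ} (hc : 0 < c)
    (hb : ∀ᶠ ε in 𝓝[>] 0, 1 ≤ b ε ∧ √ε * b ε ≤ 1)
    (hlog : (fun ε => log (b ε) - c * log (1 / ε)) =O[𝓝[>] 0] fun _ => (1 : ℝ)) :
    Tendsto (fun ε => (∫ u in Ioo 0 (b ε), ellipticIntegrand ε u) / (c * log (1 / ε)))
      (𝓝[>] 0) (𝓝 1) := by
  refine tendsto_div_nhds_one_of_isBigO_sub
    (tendsto_log_one_div_nhdsGT_zero.const_mul_atTop hc) ?_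
  have hN : (fun ε => (∫ u in Ioo 0 (b ε), ellipticIntegrand ε u) - log (b ε))
      =O[𝓝[>] 0] fun _ => (1 : ℝ) := by
    refine IsBigO.of_bound 1 ?_
    filter_upwards [hb, self_mem_nhdsWithin] with ε hbε (hε : 0 < ε)
    simpa [← integral_Ioc_eq_integral_Ioo] using
      abs_integral_ellipticIntegrand_Ioc_sub_log_le hε.le hbε.1 hbε.2
  exact (hN.add hlog).congr_left fun ε => by ring

theorem eventually_one_le_and_sqrt_mul_le_one {a : ℝ → ℝ} {lam β : ℝ} (hlam : 0 < lam)
    (ha : Tendsto a (𝓝[>] 0) (𝓝 lam)) (hβ : 0 < β) (hβ' : β < 1 / 2) :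
    ∀ᶠ ε in 𝓝[>] 0, 1 ≤ a ε / ε ^ β ∧ √ε * (a ε / ε ^ β) ≤ 1 := by
  have htop : Tendsto (fun ε => a ε / ε ^ β) (𝓝[>] 0) atTop := by
    refine (ha.pos_mul_atTop hlam (tendsto_rpow_neg_nhdsGT_zero (neg_lt_zero.mpr hβ))).congr' ?_
    filter_upwards [self_mem_nhdsWithin] with ε (hε : 0 < ε)
    rw [rpow_neg hε.le, div_eq_mul_inv]
  have hzero : Tendsto (fun ε => √ε * (a ε / ε ^ β)) (𝓝[>] 0) (𝓝 0) := by
    have hpow : Tendsto (fun ε : ℝ => ε ^ (1 / 2 - β)) (𝓝[>] 0) (𝓝 0) := by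
      have := (continuousAt_rpow_const 0 (1 / 2 - β) (Or.inr (by linarith))).tendsto.mono_left
        (nhdsWithin_le_nhds (s := Ioi 0))
      rwa [zero_rpow (by linarith)] at this
    have hprod : Tendsto (fun ε => a ε * ε ^ (1 / 2 - β)) (𝓝[>] 0) (𝓝 0) := by
      simpa using ha.mul hpow
    refine hprod.congr' ?_
    filter_upwards [self_mem_nhdsWithin] with ε (hε : 0 < ε)
    rw [sqrt_eq_rpow, rpow_sub hε]
    ring
  exact (htop.eventually_ge_atTop 1).and (hzero.eventually_le_const zero_lt_one)

theorem stmt_9_general (lam β : ℝ) (hlam : 0 < lam) (hβ : 0 < β) (hβ' : β < 1 / 2)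
    (ψ : ℝ → ℝ)
    (hψ : Tendsto ψ (nhdsWithin 0 (Set.Ioi 0)) (nhds 0)) :
    Tendsto
      (fun ε : ℝ =>
        (∫ u in Set.Ioi (0 : ℝ), 1 / Real.sqrt ((1 + u ^ 2) * (1 + ε * u ^ 2))) /
          ((1 / 2) * Real.log (1 / ε)))
      (nhdsWithin 0 (Set.Ioi 0)) (nhds 1) ∧
    Tendsto
      (fun ε : ℝ =>
        (∫ u in Set.Ioo (0 : ℝ) ((lam + ψ ε) / ε ^ β),
            1 / Real.sqrt ((1 + u ^ 2) * (1 + ε * u ^ 2))) /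
          (β * Real.log (1 / ε)))
      (nhdsWithin 0 (Set.Ioi 0)) (nhds 1) := by
  have hlamψ : Tendsto (fun ε => lam + ψ ε) (𝓝[>] 0) (𝓝 lam) := by
    simpa using hψ.const_add lam
  have hlog : (fun ε => log ((lam + ψ ε) / ε ^ β) - β * log (1 / ε)) =ᶠ[𝓝[>] 0]
      fun ε => log (lam + ψ ε) := by
    filter_upwards [hlamψ.eventually_const_lt hlam, self_mem_nhdsWithin] with ε hpos (hε : 0 < ε)
    rw [log_div hpos.ne' (rpow_pos_of_pos hε β).ne', log_rpow hε, one_div, log_inv]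
    ring
  exact ⟨tendsto_integral_ellipticIntegrand_Ioi_div_log,
    tendsto_integral_ellipticIntegrand_Ioo_div_log hβ
      (eventually_one_le_and_sqrt_mul_le_one hlam hlamψ hβ hβ')
      (((hlamψ.log hlam.ne').isBigO_one ℝ).congr' hlog.symm EventuallyEq.rfl)⟩

/-- With `N(ε) = ∫₀^{(λ+ψ(ε))/ε^β} du/√((1+u²)(1+εu²))` and
`D(ε) = ∫₀^∞ du/√((1+u²)(1+εu²))`, one has `D(ε) ~ (1/2)ln(1/ε)` and
`N(ε) ~ β·ln(1/ε)` as `ε → 0⁺`. -/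
theorem stmt_9 (lam β : ℝ) (hlam : 0 < lam) (hβ : 0 < β) (hβ' : β < 1 / 2)
    (ψ : ℝ → ℝ)
    (hψ : Tendsto ψ (nhdsWithin 0 (Set.Ioi 0)) (nhds 0))
    (hpos : ∀ᶠ ε in nhdsWithin (0 : ℝ) (Set.Ioi 0), 0 < lam + ψ ε) :
    Tendsto
      (fun ε : ℝ =>
        (∫ u in Set.Ioi (0 : ℝ), 1 / Real.sqrt ((1 + u ^ 2) * (1 + ε * u ^ 2))) /
          ((1 / 2) * Real.log (1 / ε)))
      (nhdsWithin 0 (Set.Ioi 0)) (nhds 1) ∧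
    Tendsto
      (fun ε : ℝ =>
        (∫ u in Set.Ioo (0 : ℝ) ((lam + ψ ε) / ε ^ β),
            1 / Real.sqrt ((1 + u ^ 2) * (1 + ε * u ^ 2))) /
          (β * Real.log (1 / ε)))
      (nhdsWithin 0 (Set.Ioi 0)) (nhds 1) :=
  stmt_9_general lam β hlam hβ hβ' ψ hψ
end

section
/- The three real roots of the polynomial X³ − X² − 2X + 1 are exactly 2·cos(π/7), 2·cos(3π/7), and 2·cos(5π/7); in particular 2·cos(5π/7) < 0 < 2·cos(3π/7) < 1 < 2·cos(π/7), and one has the identity 2·sin(5π/14)·(1 − 2·sin(π/14)) = 1. -/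
open Real

/-- If `cos (7θ) = -1` and `cos θ > -1`, then `c = cos θ` satisfies
`8c³ - 4c² - 4c + 1 = 0`. -/
lemma key_cos (θ : ℝ) (h7 : Real.cos (7 * θ) = -1) (hne : -1 < Real.cos θ) :
    8 * Real.cos θ ^ 3 - 4 * Real.cos θ ^ 2 - 4 * Real.cos θ + 1 = 0 := by
  set c := Real.cos θ with hc
  have h2 : Real.cos (2 * θ) = 2 * c ^ 2 - 1 := by
    rw [Real.cos_two_mul]
  have h3 : Real.cos (3 * θ) = 4 * c ^ 3 - 3 * c := by
    rw [Real.cos_three_mul]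
  have h4 : Real.cos (4 * θ) = 2 * (2 * c ^ 2 - 1) ^ 2 - 1 := by
    have : (4 : ℝ) * θ = 2 * (2 * θ) := by ring
    rw [this, Real.cos_two_mul, h2]
  have h7' : Real.cos (7 * θ) = 2 * Real.cos (4 * θ) * Real.cos (3 * θ) - c := by
    have e1 : Real.cos (7 * θ) + Real.cos θ = 2 * Real.cos (4 * θ) * Real.cos (3 * θ) := by
      rw [Real.cos_add_cos]
      ring_nf
    linarith [e1]
  have hP : 64 * c ^ 7 - 112 * c ^ 5 + 56 * c ^ 3 - 7 * c + 1 = 0 := by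
    have := h7'
    rw [h7, h4, h3] at this
    nlinarith [this]
  have hfac : (c + 1) * (8 * c ^ 3 - 4 * c ^ 2 - 4 * c + 1) ^ 2 = 0 := by
    linear_combination hP
  have hpos : c + 1 ≠ 0 := by linarith
  have hsq : (8 * c ^ 3 - 4 * c ^ 2 - 4 * c + 1) ^ 2 = 0 :=
    (mul_eq_zero.1 hfac).resolve_left hpos
  exact pow_eq_zero_iff (by norm_num) |>.1 hsq

/-- the real roots of `X³ − X² − 2X + 1` are exactly `2cos(π/7)`,
`2cos(3π/7)` and `2cos(5π/7)`; they satisfy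
`2cos(5π/7) < 0 < 2cos(3π/7) < 1 < 2cos(π/7)`, and
`2 sin(5π/14) (1 − 2 sin(π/14)) = 1`. -/
theorem stmt_11 :
    (∀ x : ℝ, x ^ 3 - x ^ 2 - 2 * x + 1 = 0 ↔
      (x = 2 * Real.cos (π / 7) ∨ x = 2 * Real.cos (3 * π / 7) ∨
        x = 2 * Real.cos (5 * π / 7))) ∧
    2 * Real.cos (5 * π / 7) < 0 ∧
    0 < 2 * Real.cos (3 * π / 7) ∧
    2 * Real.cos (3 * π / 7) < 1 ∧
    1 < 2 * Real.cos (π / 7) ∧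
    2 * Real.sin (5 * π / 14) * (1 - 2 * Real.sin (π / 14)) = 1 := by
  have hπ := Real.pi_pos
  -- key cubic relations
  have neg1lt : ∀ θ : ℝ, 0 ≤ θ → θ < π → -1 < Real.cos θ := by
    intro θ h0 h1
    have := Real.cos_lt_cos_of_nonneg_of_le_pi h0 le_rfl h1
    rw [Real.cos_pi] at this
    linarith
  have q1 : 8 * Real.cos (π / 7) ^ 3 - 4 * Real.cos (π / 7) ^ 2 - 4 * Real.cos (π / 7) + 1 = 0 := by
    apply key_cos
    · rw [show 7 * (π / 7) = π by ring, Real.cos_pi]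
    · exact neg1lt _ (by positivity) (by linarith)
  have q2 : 8 * Real.cos (3 * π / 7) ^ 3 - 4 * Real.cos (3 * π / 7) ^ 2 -
      4 * Real.cos (3 * π / 7) + 1 = 0 := by
    apply key_cos
    · rw [show 7 * (3 * π / 7) = π + 2 * π by ring, Real.cos_add_two_pi, Real.cos_pi]
    · exact neg1lt _ (by positivity) (by linarith)
  have q3 : 8 * Real.cos (5 * π / 7) ^ 3 - 4 * Real.cos (5 * π / 7) ^ 2 -
      4 * Real.cos (5 * π / 7) + 1 = 0 := by
    apply key_cos
    · rw [show 7 * (5 * π / 7) = π + 2 * π + 2 * π by ring, Real.cos_add_two_pi,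
        Real.cos_add_two_pi, Real.cos_pi]
    · exact neg1lt _ (by positivity) (by linarith)
  set a := 2 * Real.cos (π / 7) with ha
  set b := 2 * Real.cos (3 * π / 7) with hb
  set c := 2 * Real.cos (5 * π / 7) with hc
  have pa : a ^ 3 - a ^ 2 - 2 * a + 1 = 0 := by rw [ha]; linear_combination q1
  have pb : b ^ 3 - b ^ 2 - 2 * b + 1 = 0 := by rw [hb]; linear_combination q2
  have pc : c ^ 3 - c ^ 2 - 2 * c + 1 = 0 := by rw [hc]; linear_combination q3
  -- inequalities
  have hb2 : Real.cos (3 * π / 7) < 1 / 2 := by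
    have := Real.cos_lt_cos_of_nonneg_of_le_pi (by positivity : (0:ℝ) ≤ π / 3)
      (by linarith : 3 * π / 7 ≤ π) (by linarith : π / 3 < 3 * π / 7)
    rwa [Real.cos_pi_div_three] at this
  have ha2 : 1 / 2 < Real.cos (π / 7) := by
    have := Real.cos_lt_cos_of_nonneg_of_le_pi (by positivity : (0:ℝ) ≤ π / 7)
      (by linarith : π / 3 ≤ π) (by linarith : π / 7 < π / 3)
    rwa [Real.cos_pi_div_three] at this
  have hcneg : c < 0 := by
    have : Real.cos (5 * π / 7) < Real.cos (π / 2) := by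
      apply Real.cos_lt_cos_of_nonneg_of_le_pi (by positivity) (by linarith) (by linarith)
    rw [Real.cos_pi_div_two] at this
    rw [hc]; linarith
  have hbpos : 0 < b := by
    have : Real.cos (π / 2) < Real.cos (3 * π / 7) := by
      apply Real.cos_lt_cos_of_nonneg_of_le_pi (by positivity) (by linarith) (by linarith)
    rw [Real.cos_pi_div_two] at this
    rw [hb]; linarith
  have hblt1 : b < 1 := by rw [hb]; linarith
  have hagt1 : 1 < a := by rw [ha]; linarith
  have hab : a ≠ b := by intro h; rw [h] at hagt1; linarith
  have hbc : b ≠ c := by intro h; rw [h] at hbpos; linarith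
  have hac : a ≠ c := by intro h; rw [h] at hagt1; linarith
  -- the pairwise relations
  have s1 : (a - b) * (a ^ 2 + a * b + b ^ 2 - a - b - 2) = 0 := by linear_combination pa - pb
  have h1 : a ^ 2 + a * b + b ^ 2 - a - b - 2 = 0 :=
    (mul_eq_zero.1 s1).resolve_left (sub_ne_zero.2 hab)
  have s3 : (a - c) * (a ^ 2 + a * c + c ^ 2 - a - c - 2) = 0 := by linear_combination pa - pc
  have h3 : a ^ 2 + a * c + c ^ 2 - a - c - 2 = 0 :=
    (mul_eq_zero.1 s3).resolve_left (sub_ne_zero.2 hac)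
  have ssum : (b - c) * (a + b + c - 1) = 0 := by linear_combination h1 - h3
  have hsum : a + b + c = 1 := by
    have := (mul_eq_zero.1 ssum).resolve_left (sub_ne_zero.2 hbc)
    linarith
  refine ⟨fun x => ⟨fun hx => ?_, fun hx => ?_⟩, hcneg, hbpos, hblt1, hagt1, ?_⟩
  · have hprod : (x - a) * (x - b) * (x - c) = 0 := by
      linear_combination hx + (-x ^ 2 + c ^ 2 + b * x - b * c + a * x - a * c) * hsum +
        (c - x) * h1 - pc
    rcases mul_eq_zero.1 hprod with h | h
    · rcases mul_eq_zero.1 h with h | h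
      · exact Or.inl (sub_eq_zero.1 h)
      · exact Or.inr (Or.inl (sub_eq_zero.1 h))
    · exact Or.inr (Or.inr (sub_eq_zero.1 h))
  · rcases hx with rfl | rfl | rfl
    · exact pa
    · exact pb
    · exact pc
  · -- 2 sin(5π/14) (1 - 2 sin(π/14)) = 1
    have e1 : Real.sin (5 * π / 14) = Real.cos (π / 7) := by
      rw [← Real.cos_pi_div_two_sub]
      ring_nf
    have e2 : Real.sin (π / 14) = Real.cos (3 * π / 7) := by
      rw [← Real.cos_pi_div_two_sub]
      ring_nf
    rw [e1, e2]
    have e3 : Real.cos (3 * π / 7) = 4 * Real.cos (π / 7) ^ 3 - 3 * Real.cos (π / 7) := by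
      rw [show 3 * π / 7 = 3 * (π / 7) by ring, Real.cos_three_mul]
    rw [e3]
    linear_combination (-2 * Real.cos (π / 7) - 1) * q1
end

section
/- For every integer q ≥ 5 with q ∉ {6, 10}, there exists a natural number p coprime to q such that 1/3 < p/q < 1/2 (equivalently, q < 3p and 2p < q); and for q = 6 and q = 10 no such p exists. -/
lemma bez_coprime (a b : ℕ) (x y : ℤ) (h : (a : ℤ) * x + (b : ℤ) * y = 1) :
    Nat.Coprime a b := by
  rw [← Nat.isCoprime_iff_coprime]
  exact ⟨x, y, by linarith⟩

/-- for every integer `q ≥ 5` with `q ∉ {6, 10}` there is a natural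
number `p` coprime to `q` with `1/3 < p/q < 1/2` (i.e. `q < 3p` and `2p < q`); for
`q = 6` and `q = 10` no such `p` exists. -/
theorem stmt_17 :
    (∀ q : ℕ, 5 ≤ q → q ≠ 6 → q ≠ 10 →
      ∃ p : ℕ, Nat.Coprime p q ∧ q < 3 * p ∧ 2 * p < q) ∧
    ¬ (∃ p : ℕ, Nat.Coprime p 6 ∧ 6 < 3 * p ∧ 2 * p < 6) ∧
    ¬ (∃ p : ℕ, Nat.Coprime p 10 ∧ 10 < 3 * p ∧ 2 * p < 10) := by
  refine ⟨?_, ?_, ?_⟩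
  · intro q hq h6 h10
    have hcases : q % 2 = 1 ∨ q % 4 = 0 ∨ q % 8 = 2 ∨ q % 8 = 6 := by omega
    rcases hcases with h | h | h | h
    · -- q = 2k+1, p = k
      set k := q / 2 with hk
      have hq2 : q = 2 * k + 1 := by omega
      refine ⟨k, bez_coprime k q (-2) 1 ?_, by omega, by omega⟩
      have : (q : ℤ) = 2 * k + 1 := by exact_mod_cast hq2
      linarith
    · -- q = 4k, p = 2k-1
      set k := q / 4 with hk
      have hq2 : q = 4 * k := by omega
      have hk2 : 2 ≤ k := by omega
      refine ⟨2 * k - 1, bez_coprime (2 * k - 1) q (-(2 * k + 1)) k ?_, by omega, by omega⟩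
      have h1 : ((2 * k - 1 : ℕ) : ℤ) = 2 * (k : ℤ) - 1 := by push_cast [hk2]; omega
      have h2 : (q : ℤ) = 4 * k := by exact_mod_cast hq2
      rw [h1, h2]; ring
    · -- q = 8k+2, k ≥ 2, p = 4k-1
      set k := q / 8 with hk
      have hq2 : q = 8 * k + 2 := by omega
      have hk2 : 2 ≤ k := by omega
      refine ⟨4 * k - 1, bez_coprime (4 * k - 1) q (-(2 * k + 1)) k ?_, by omega, by omega⟩
      have h1 : ((4 * k - 1 : ℕ) : ℤ) = 4 * (k : ℤ) - 1 := by push_cast [hk2]; omega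
      have h2 : (q : ℤ) = 8 * k + 2 := by exact_mod_cast hq2
      rw [h1, h2]; ring
    · -- q = 8k+6, k ≥ 1, p = 4k+1
      set k := q / 8 with hk
      have hq2 : q = 8 * k + 6 := by omega
      have hk2 : 1 ≤ k := by omega
      refine ⟨4 * k + 1, bez_coprime (4 * k + 1) q (2 * k + 1) (-k) ?_, by omega, by omega⟩
      have h2 : (q : ℤ) = 8 * k + 6 := by exact_mod_cast hq2
      push_cast
      rw [h2]; ring
  · rintro ⟨p, hc, h1, h2⟩
    have : p = 2 := by omega
    subst this
    exact absurd hc (by decide)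
  · rintro ⟨p, hc, h1, h2⟩
    have : p = 4 := by omega
    subst this
    exact absurd hc (by decide)
end

section
/- Let X be a metric space and θ : X → ℝ/ℤ a continuous map such that for every nonempty open set U ⊆ X, the image θ(U) contains a nonempty open subset of ℝ/ℤ. Define g : X × ℝ/ℤ → X × ℝ/ℤ by g(x, α) = (x, α + θ(x)). Then for every δ ∈ (0, 1/2), the dynamical system (X × ℝ/ℤ, g) has δ-sensitiveness to initial conditions: for every point M ∈ X × ℝ/ℤ and every neighborhood W of M, there exists M′ ∈ W such that dist(gⁿ(M), gⁿ(M′)) ≥ δ for infinitely many integers n, where X × ℝ/ℤ carries the ℓ¹ product metric dist((x,α),(x′,α′)) = d_X(x,x′) + ‖α − α′‖, with ‖·‖ the natural quotient distance on ℝ/ℤ. -/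
/-!
Points `x'` near `x` can be chosen with `θ x' - θ x` a dyadic point of the circle of exact order
`2 ^ (k + 1)`, since such points are dense and `θ` maps open sets onto sets with interior.
The iterates of the skew map add `n • θ` to the angle, so at the infinitely many times
`n = 2 ^ k * (2 * N + 1)` the angles of the two orbits are exactly opposite, at distance `1 / 2`.
-/

theorem Function.iterate_skewProduct_apply {X G : Type*} [AddMonoid G] (θ : X → G) (n : ℕ)
    (q : X × G) : (fun q : X × G => (q.1, q.2 + θ q.1))^[n] q = (q.1, q.2 + n • θ q.1) := by
  induction n with
  | zero => simp
  | succ n ih => rw [Function.iterate_succ_apply', ih, succ_nsmul, add_assoc]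

theorem Real.dense_setOf_odd_div_two_pow :
    Dense {x : ℝ | ∃ (m : ℤ) (k : ℕ), x = (2 * m + 1) / 2 ^ (k + 1)} := by
  refine dense_of_exists_between fun a b hab => ?_
  obtain ⟨k, hk⟩ := exists_pow_lt_of_lt_one (sub_pos.2 hab) (one_half_lt_one (α := ℝ))
  have hk' : 1 < (b - a) * 2 ^ k := by
    rwa [div_pow, one_pow, div_lt_iff₀ (by positivity)] at hk
  set m : ℤ := ⌊a * 2 ^ k + 1 / 2⌋
  have hm_lt : a * 2 ^ k + 1 / 2 < m + 1 := Int.lt_floor_add_one _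
  have hm_le : (m : ℝ) ≤ a * 2 ^ k + 1 / 2 := Int.floor_le _
  have hpos : (0 : ℝ) < 2 ^ k := by positivity
  refine ⟨(2 * m + 1) / 2 ^ (k + 1), ⟨m, k, rfl⟩, ?_, ?_⟩
  · rw [lt_div_iff₀ (by positivity), pow_succ]; nlinarith
  · rw [div_lt_iff₀ (by positivity), pow_succ]; nlinarith

namespace AddCircle

variable {p : ℝ}

theorem two_pow_nsmul_coe_odd_div_two_pow (m : ℤ) (k : ℕ) :
    2 ^ k • (((2 * m + 1) / 2 ^ (k + 1) * p : ℝ) : AddCircle p) = ↑(p / 2) := by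
  have : (2 : ℝ) ^ k * ((2 * m + 1) / 2 ^ (k + 1) * p) = p / 2 + m • p := by
    rw [pow_succ, zsmul_eq_mul]; field_simp; ring
  rw [← coe_nsmul, nsmul_eq_mul, Nat.cast_pow, Nat.cast_ofNat, this, coe_add,
    (coe_eq_zero_iff p).2 ⟨m, rfl⟩, add_zero]

theorem dense_setOf_two_pow_nsmul_eq_half_period (hp : p ≠ 0) :
    Dense {γ : AddCircle p | ∃ k : ℕ, 2 ^ k • γ = ↑(p / 2)} := by
  have hrange : DenseRange fun x : ℝ => ((x * p : ℝ) : AddCircle p) := by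
    refine Function.Surjective.denseRange fun γ => ?_
    obtain ⟨y, rfl⟩ := QuotientAddGroup.mk_surjective γ
    exact ⟨y / p, by rw [div_mul_cancel₀ y hp]⟩
  refine (hrange.dense_image (by fun_prop) Real.dense_setOf_odd_div_two_pow).mono ?_
  rintro _ ⟨_, ⟨m, k, rfl⟩, rfl⟩
  exact ⟨k, two_pow_nsmul_coe_odd_div_two_pow m k⟩

theorem odd_nsmul_half_period (N : ℕ) : (2 * N + 1) • (↑(p / 2) : AddCircle p) = ↑(p / 2) := by
  rw [add_nsmul, one_nsmul, mul_nsmul, two_nsmul, ← coe_add, add_halves, coe_period,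
    nsmul_zero, zero_add]

theorem exists_mem_two_pow_nsmul_sub_eq_half_period {X : Type*} [TopologicalSpace X]
    (hp : p ≠ 0) (θ : X → AddCircle p)
    (himg : ∀ U : Set X, IsOpen U → U.Nonempty →
      ∃ V : Set (AddCircle p), V.Nonempty ∧ IsOpen V ∧ V ⊆ θ '' U)
    {U : Set X} (hU : IsOpen U) {x : X} (hx : x ∈ U) :
    ∃ x' ∈ U, ∃ k : ℕ, 2 ^ k • (θ x' - θ x) = ↑(p / 2) := by
  obtain ⟨V, ⟨v, hv⟩, hV, hVU⟩ := himg U hU ⟨x, hx⟩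
  obtain ⟨γ, ⟨k, hk⟩, hγ⟩ := (dense_setOf_two_pow_nsmul_eq_half_period hp).exists_mem_open
    (hV.preimage (continuous_const_add (θ x))) ⟨v - θ x, by simpa using hv⟩
  obtain ⟨x', hx', hθx'⟩ := hVU hγ
  exact ⟨x', hx', k, by rwa [hθx', add_sub_cancel_left]⟩

end AddCircle

open AddCircle in
theorem stmt_18_general {X : Type*} [MetricSpace X]
    (θ : X → UnitAddCircle)
    (himg : ∀ U : Set X, IsOpen U → U.Nonempty →
      ∃ V : Set UnitAddCircle, V.Nonempty ∧ IsOpen V ∧ V ⊆ θ '' U)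
    (δ : ℝ) (hδ : δ ∈ Set.Ioo (0 : ℝ) (1 / 2)) :
    ∀ M : X × UnitAddCircle, ∀ W ∈ nhds M,
      ∃ M' ∈ W, ∀ N : ℕ, ∃ n : ℕ, N ≤ n ∧
        δ ≤ dist ((fun p : X × UnitAddCircle => (p.1, p.2 + θ p.1))^[n] M).1
              ((fun p : X × UnitAddCircle => (p.1, p.2 + θ p.1))^[n] M').1 +
            dist ((fun p : X × UnitAddCircle => (p.1, p.2 + θ p.1))^[n] M).2
              ((fun p : X × UnitAddCircle => (p.1, p.2 + θ p.1))^[n] M').2 := by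
  intro M W hW
  obtain ⟨S, hS, T, hT, hST⟩ := mem_nhds_prod_iff.mp hW
  obtain ⟨U, hUS, hU, hxU⟩ := mem_nhds_iff.mp hS
  obtain ⟨x', hx'U, k, hk⟩ :=
    exists_mem_two_pow_nsmul_sub_eq_half_period one_ne_zero θ himg hU hxU
  refine ⟨(x', M.2), hST ⟨hUS hx'U, mem_of_mem_nhds hT⟩, fun N => ⟨2 ^ k * (2 * N + 1), ?_, ?_⟩⟩
  · nlinarith [Nat.one_le_two_pow (n := k)]
  have hangle : dist (M.2 + (2 ^ k * (2 * N + 1)) • θ M.1)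
      (M.2 + (2 ^ k * (2 * N + 1)) • θ x') = 1 / 2 := by
    rw [dist_add_left, dist_comm, dist_eq_norm, ← nsmul_sub, mul_nsmul, hk,
      odd_nsmul_half_period, norm_half_period_eq]
    norm_num
  rw [Function.iterate_skewProduct_apply, Function.iterate_skewProduct_apply]
  linarith [dist_nonneg (x := M.1) (y := x'), hδ.2]

/-- if `θ : X → ℝ/ℤ` is continuous and the image of every nonempty open
set contains a nonempty open set, then the skew map `g(x,α) = (x, α + θ(x))` on
`X × ℝ/ℤ` has `δ`-sensitiveness to initial conditions for every `δ ∈ (0,1/2)`, with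
respect to the `ℓ¹` product distance `d_X(x,x') + ‖α − α'‖`. -/
theorem stmt_18 {X : Type*} [MetricSpace X]
    (θ : X → UnitAddCircle) (hθ : Continuous θ)
    (himg : ∀ U : Set X, IsOpen U → U.Nonempty →
      ∃ V : Set UnitAddCircle, V.Nonempty ∧ IsOpen V ∧ V ⊆ θ '' U)
    (δ : ℝ) (hδ : δ ∈ Set.Ioo (0 : ℝ) (1 / 2)) :
    ∀ M : X × UnitAddCircle, ∀ W ∈ nhds M,
      ∃ M' ∈ W, ∀ N : ℕ, ∃ n : ℕ, N ≤ n ∧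
        δ ≤ dist ((fun p : X × UnitAddCircle => (p.1, p.2 + θ p.1))^[n] M).1
              ((fun p : X × UnitAddCircle => (p.1, p.2 + θ p.1))^[n] M').1 +
            dist ((fun p : X × UnitAddCircle => (p.1, p.2 + θ p.1))^[n] M).2
              ((fun p : X × UnitAddCircle => (p.1, p.2 + θ p.1))^[n] M').2 :=
  stmt_18_general θ himg δ hδ
end
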